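/- arXiv:1504.04814 — 6 statements merged into one kernel-verified Lean document; each statement's English description precedes it below -/
import Mathlib

section
/- If θ₀ ∈ ℓ² satisfies θ₀,i² ≤ L i^{−2β−1} for all i with 0 < β < α + 1/2, then for every ε ∈ (0,1), inf{τ² ‖h‖²_{H^{α,τ}} : ‖h − θ₀‖₂ ≤ ε} ≤ C L^{(2α+1)/(2β)} ε^{−(2α−2β+1)/β} / (2α + 1 − 2β), achieved by truncating θ₀ at level N = ⌈(L/(2β))^{1/(2β)} ε^{−1/β}⌉. -/
/-!
Truncate `θ₀` after `N` coordinates. The discarded tail has squared norm at most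
`∑_{i ≥ N} L (i+1)^{-2β-1} ≲ L (N+1)^{-2β}`, by comparison with `∫ x^{-2β-1}`, while the kept head
costs `∑_{i < N} (i+1)^{2α+1} θ₀ᵢ² ≤ L ∑_{i < N} (i+1)^{2α-2β} ≲ L N^{2α-2β+1}`, the sum being
compared with `∫ x^{2α-2β}` (which converges at `0` because `β < α + 1/2`). Taking
`N = ⌊(A L / ε²)^{1/(2β)}⌋` with `A = 1 + 1/(2β)` makes the tail at most `ε²` and the cost
`≲ L^{(2α+1)/(2β)} ε^{-(2α-2β+1)/β}`; since the tail bound involves `N + 1`, the level `N = 0`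
needs no separate treatment.
-/

open Real Set

lemma mul_add_one_rpow_sub_one_le {p x : ℝ} (hp : 0 < p) (hp1 : p ≤ 1) (hx : 0 ≤ x) :
    p * (x + 1) ^ (p - 1) ≤ (x + 1) ^ p - x ^ p := by
  have hx1 : 0 < x + 1 := by linarith
  have hbern : (1 + -(x + 1)⁻¹) ^ p ≤ 1 + p * -(x + 1)⁻¹ :=
    rpow_one_add_le_one_add_mul_self
      (neg_le_neg (inv_le_one_of_one_le₀ (by linarith))) hp.le hp1
  rw [show 1 + -(x + 1)⁻¹ = x / (x + 1) by field_simp; ring, div_rpow hx hx1.le,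
    div_le_iff₀ (rpow_pos_of_pos hx1 p)] at hbern
  rw [rpow_sub_one hx1.ne']
  calc p * ((x + 1) ^ p / (x + 1)) = (x + 1) ^ p - (1 + p * -(x + 1)⁻¹) * (x + 1) ^ p := by
        field_simp; ring
    _ ≤ (x + 1) ^ p - x ^ p := by linarith

lemma add_one_rpow_le_add_one_rpow_sub_rpow {c x : ℝ} (hc : 0 ≤ c) (hx : 0 ≤ x) :
    (x + 1) ^ c ≤ (x + 1) ^ (c + 1) - x ^ (c + 1) := by
  have hx1 : 0 < x + 1 := by linarith
  have : x * x ^ c ≤ x * (x + 1) ^ c := by gcongr; linarith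
  rw [rpow_add_one hx1.ne', rpow_add_one' hx (by linarith)]
  nlinarith

lemma add_one_rpow_le_mul_sub_rpow {c x : ℝ} (hc : -1 < c) (hx : 0 ≤ x) :
    (x + 1) ^ c ≤ max 1 (c + 1)⁻¹ * ((x + 1) ^ (c + 1) - x ^ (c + 1)) := by
  have hdiff : 0 ≤ (x + 1) ^ (c + 1) - x ^ (c + 1) :=
    sub_nonneg.2 (rpow_le_rpow hx (by linarith) (by linarith))
  rcases le_or_gt 0 c with hc0 | hc0
  · calc (x + 1) ^ c ≤ (x + 1) ^ (c + 1) - x ^ (c + 1) := add_one_rpow_le_add_one_rpow_sub_rpow hc0 hx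
      _ ≤ _ := le_mul_of_one_le_left hdiff (le_max_left _ _)
  · have h := mul_add_one_rpow_sub_one_le (by linarith : 0 < c + 1) (by linarith) hx
    rw [add_sub_cancel_right] at h
    calc (x + 1) ^ c ≤ (c + 1)⁻¹ * ((x + 1) ^ (c + 1) - x ^ (c + 1)) := by
          rw [le_inv_mul_iff₀ (by linarith)]; exact h
      _ ≤ _ := mul_le_mul_of_nonneg_right (le_max_right _ _) hdiff

lemma sum_range_add_one_rpow_le {c : ℝ} (hc : -1 < c) (N : ℕ) :
    ∑ i ∈ Finset.range N, ((i : ℝ) + 1) ^ c ≤ max 1 (c + 1)⁻¹ * (N : ℝ) ^ (c + 1) := by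
  calc ∑ i ∈ Finset.range N, ((i : ℝ) + 1) ^ c
      ≤ ∑ i ∈ Finset.range N, max 1 (c + 1)⁻¹ * (((i + 1 : ℕ) : ℝ) ^ (c + 1) - (i : ℝ) ^ (c + 1)) :=
        Finset.sum_le_sum fun i _ => by
          push_cast; exact add_one_rpow_le_mul_sub_rpow hc i.cast_nonneg
    _ = max 1 (c + 1)⁻¹ * (N : ℝ) ^ (c + 1) := by
        rw [← Finset.mul_sum, Finset.sum_range_sub (fun i : ℕ => (i : ℝ) ^ (c + 1))]
        simp [zero_rpow (by linarith : c + 1 ≠ 0)]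

lemma summable_add_one_rpow {r : ℝ} (hr : r < -1) : Summable fun i : ℕ => ((i : ℝ) + 1) ^ r := by
  simpa using (summable_nat_add_iff 1).2 (Real.summable_nat_rpow.2 hr)

lemma tsum_add_one_rpow_tail_le {s : ℝ} (hs : 0 < s) (N : ℕ) :
    ∑' n : ℕ, (((n + N : ℕ) : ℝ) + 1) ^ (-s - 1) ≤ (1 + 1 / s) * ((N : ℝ) + 1) ^ (-s) := by
  set f : ℝ → ℝ := fun x => x ^ (-s - 1)
  have hsum : Summable fun n : ℕ => f (n + N + 1 : ℕ) := by
    have := (summable_nat_add_iff (N + 1)).2 (Real.summable_nat_rpow.2 (by linarith : -s - 1 < -1))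
    simpa only [f, add_assoc] using this
  have hanti : AntitoneOn f (Ici ((N + 1 : ℕ) : ℝ)) := fun x hx y _ hxy =>
    rpow_le_rpow_of_nonpos (lt_of_lt_of_le (by positivity) hx) hxy (by linarith)
  have hint : ∫ x in Ioi ((N + 1 : ℕ) : ℝ), f x = ((N : ℝ) + 1) ^ (-s) / s := by
    rw [integral_Ioi_rpow_of_lt (by linarith) (by positivity)]
    push_cast
    rw [show -s - 1 + 1 = -s by ring, neg_div_neg_eq]
  have htail := hanti.tsum_comp_add_le_integral (N + 1)
    (integrableOn_Ioi_rpow_of_lt (by linarith) (by positivity))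
    (fun t ht => rpow_nonneg (lt_trans (by positivity) ht).le _)
  rw [hint] at htail
  -- The term `n = 0` is split off so that the integral comparison starts at `N + 1 > 0`.
  calc ∑' n : ℕ, (((n + N : ℕ) : ℝ) + 1) ^ (-s - 1)
      = f (0 + N + 1 : ℕ) + ∑' n : ℕ, f (n + (N + 1) + 1 : ℕ) := by
        rw [show (fun n : ℕ => (((n + N : ℕ) : ℝ) + 1) ^ (-s - 1)) = fun n => f (n + N + 1 : ℕ)
          by ext; simp [f], hsum.tsum_eq_zero_add]
        simp only [add_assoc, add_comm 1 N]
    _ ≤ ((N : ℝ) + 1) ^ (-s) + ((N : ℝ) + 1) ^ (-s) / s := by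
        gcongr
        simp only [f, zero_add, Nat.cast_add_one]
        exact rpow_le_rpow_of_exponent_le (by linarith) (by linarith)
    _ = (1 + 1 / s) * ((N : ℝ) + 1) ^ (-s) := by ring

def truncation (θ : ℕ → ℝ) (N : ℕ) : ℕ → ℝ := fun i => if i < N then θ i else 0

noncomputable def truncationLevel (s L ε : ℝ) : ℕ := ⌊((1 + 1 / s) * L / ε ^ 2) ^ s⁻¹⌋₊

section Truncation

variable {θ : ℕ → ℝ} {L s : ℝ}

lemma tsum_sq_truncation_sub_le (hL : 0 ≤ L) (hs : 0 < s)
    (hθ : ∀ i : ℕ, θ i ^ 2 ≤ L * ((i : ℝ) + 1) ^ (-s - 1)) (N : ℕ) :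
    ∑' i, (truncation θ N i - θ i) ^ 2 ≤ L * ((1 + 1 / s) * ((N : ℝ) + 1) ^ (-s)) := by
  have hmaj : Summable fun i : ℕ => L * ((i : ℝ) + 1) ^ (-s - 1) :=
    (summable_add_one_rpow (by linarith)).mul_left L
  have hdiff : ∀ i, (truncation θ N i - θ i) ^ 2 = if i < N then 0 else θ i ^ 2 := by
    intro i; unfold truncation; split_ifs <;> simp
  have hsum : Summable fun i => (truncation θ N i - θ i) ^ 2 :=
    hmaj.of_nonneg_of_le (fun _ => sq_nonneg _) fun i => by
      rw [hdiff]; split_ifs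
      · exact (sq_nonneg _).trans (hθ i)
      · exact hθ i
  rw [← hsum.sum_add_tsum_nat_add N, Finset.sum_eq_zero fun i hi => by
    rw [hdiff, if_pos (Finset.mem_range.1 hi)], zero_add]
  calc ∑' n, (truncation θ N (n + N) - θ (n + N)) ^ 2
      ≤ ∑' n : ℕ, L * (((n + N : ℕ) : ℝ) + 1) ^ (-s - 1) :=
        ((summable_nat_add_iff N).2 hsum).tsum_le_tsum
          (fun n => by rw [hdiff, if_neg (by omega)]; exact hθ _)
          ((summable_nat_add_iff N).2 hmaj)
    _ ≤ L * ((1 + 1 / s) * ((N : ℝ) + 1) ^ (-s)) := by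
        rw [tsum_mul_left]; exact mul_le_mul_of_nonneg_left (tsum_add_one_rpow_tail_le hs N) hL

lemma tsum_rpow_mul_sq_truncation_le {a : ℝ} (hL : 0 ≤ L) (hsa : s < a)
    (hθ : ∀ i : ℕ, θ i ^ 2 ≤ L * ((i : ℝ) + 1) ^ (-s - 1)) (N : ℕ) :
    ∑' i : ℕ, ((i : ℝ) + 1) ^ a * truncation θ N i ^ 2
      ≤ L * (max 1 (a - s)⁻¹ * (N : ℝ) ^ (a - s)) := by
  rw [tsum_eq_sum (s := Finset.range N) fun i hi => by
    simp [truncation, Finset.mem_range.not.1 hi]]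
  calc ∑ i ∈ Finset.range N, ((i : ℝ) + 1) ^ a * truncation θ N i ^ 2
      ≤ ∑ i ∈ Finset.range N, L * ((i : ℝ) + 1) ^ (a - s - 1) := by
        refine Finset.sum_le_sum fun i hi => ?_
        have hi1 : (0 : ℝ) < i + 1 := by positivity
        rw [truncation, if_pos (Finset.mem_range.1 hi),
          show a - s - 1 = a + (-s - 1) by ring, rpow_add hi1]
        calc ((i : ℝ) + 1) ^ a * θ i ^ 2 ≤ ((i : ℝ) + 1) ^ a * (L * ((i : ℝ) + 1) ^ (-s - 1)) :=
              mul_le_mul_of_nonneg_left (hθ i) (rpow_nonneg hi1.le _)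
          _ = _ := by ring
    _ ≤ L * (max 1 (a - s)⁻¹ * (N : ℝ) ^ (a - s)) := by
        rw [← Finset.mul_sum]
        refine mul_le_mul_of_nonneg_left ?_ hL
        simpa using sum_range_add_one_rpow_le (by linarith : -1 < a - s - 1) N

lemma sqrt_tsum_sq_truncation_truncationLevel_sub_le {ε : ℝ} (hL : 0 < L) (hs : 0 < s)
    (hε : 0 < ε) (hθ : ∀ i : ℕ, θ i ^ 2 ≤ L * ((i : ℝ) + 1) ^ (-s - 1)) :
    Real.sqrt (∑' i, (truncation θ (truncationLevel s L ε) i - θ i) ^ 2) ≤ ε := by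
  set A := 1 + 1 / s
  set M := (A * L / ε ^ 2) ^ s⁻¹
  have hA : 0 < A := by positivity
  have hM : 0 < M := by positivity
  have hMs : M ^ s = A * L / ε ^ 2 := rpow_inv_rpow (by positivity) hs.ne'
  refine (Real.sqrt_le_sqrt ?_).trans_eq (Real.sqrt_sq hε.le)
  calc ∑' i, (truncation θ (truncationLevel s L ε) i - θ i) ^ 2
      ≤ L * (A * ((truncationLevel s L ε : ℝ) + 1) ^ (-s)) :=
        tsum_sq_truncation_sub_le hL.le hs hθ _
    _ ≤ L * (A * M ^ (-s)) := by
        have hMN : M ≤ (truncationLevel s L ε : ℝ) + 1 := (Nat.lt_floor_add_one M).le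
        have := rpow_le_rpow_of_nonpos hM hMN (neg_nonpos.2 hs.le)
        gcongr
    _ = ε ^ 2 := by rw [rpow_neg hM.le, hMs]; field_simp [hA.ne']

lemma tsum_rpow_mul_sq_truncation_truncationLevel_le {a ε : ℝ} (hL : 0 < L) (hs : 0 < s)
    (hsa : s < a) (hε : 0 < ε) (hθ : ∀ i : ℕ, θ i ^ 2 ≤ L * ((i : ℝ) + 1) ^ (-s - 1)) :
    ∑' i : ℕ, ((i : ℝ) + 1) ^ a * truncation θ (truncationLevel s L ε) i ^ 2
      ≤ max 1 (a - s)⁻¹ * (1 + 1 / s) ^ ((a - s) / s) * L ^ (a / s) * ε ^ (-(2 * (a - s) / s)) := by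
  set A := 1 + 1 / s
  set M := (A * L / ε ^ 2) ^ s⁻¹
  have hM : 0 < M := by positivity
  have hMp : M ^ (a - s) = A ^ ((a - s) / s) * L ^ ((a - s) / s) * ε ^ (-(2 * (a - s) / s)) := by
    rw [← rpow_mul (by positivity), inv_mul_eq_div, div_rpow (by positivity) (by positivity),
      mul_rpow (by positivity) hL.le, ← rpow_natCast, ← rpow_mul hε.le, div_eq_mul_inv,
      ← rpow_neg hε.le]
    push_cast; ring_nf
  have hLa : L ^ (a / s) = L * L ^ ((a - s) / s) := by
    rw [← rpow_one_add' hL.le (by positivity)]; congr 1; field_simp; ring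
  calc _ ≤ L * (max 1 (a - s)⁻¹ * (truncationLevel s L ε : ℝ) ^ (a - s)) :=
        tsum_rpow_mul_sq_truncation_le hL.le hsa hθ _
    _ ≤ L * (max 1 (a - s)⁻¹ * M ^ (a - s)) := by
        have hNM : (truncationLevel s L ε : ℝ) ≤ M := Nat.floor_le hM.le
        gcongr
    _ = _ := by rw [hMp, hLa]; ring

end Truncation

theorem stmt_6_general (α β : ℝ) (hβ : 0 < β) (hβα : β < α + 1 / 2) :
    ∃ C : ℝ, 0 < C ∧
      ∀ (L ε : ℝ), 0 < L → 0 < ε → ε < 1 →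
      ∀ θ₀ : ℕ → ℝ, (∀ i : ℕ, θ₀ i ^ 2 ≤ L * ((i : ℝ) + 1) ^ (-2 * β - 1)) →
        sInf {r : ℝ | ∃ h : ℕ → ℝ,
              Real.sqrt (∑' i : ℕ, (h i - θ₀ i) ^ 2) ≤ ε ∧
              r = ∑' i : ℕ, ((i : ℝ) + 1) ^ (2 * α + 1) * h i ^ 2}
          ≤ C * L ^ ((2 * α + 1) / (2 * β)) * ε ^ (-(2 * α - 2 * β + 1) / β)
              / (2 * α + 1 - 2 * β) := by
  have hs : 0 < 2 * β := by linarith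
  have hp : 0 < 2 * α + 1 - 2 * β := by linarith
  refine ⟨(2 * α + 1 - 2 * β) * max 1 (2 * α + 1 - 2 * β)⁻¹
    * (1 + 1 / (2 * β)) ^ ((2 * α + 1 - 2 * β) / (2 * β)), by positivity,
    fun L ε hL hε _ θ₀ hθ => ?_⟩
  have hθ' : ∀ i : ℕ, θ₀ i ^ 2 ≤ L * ((i : ℝ) + 1) ^ (-(2 * β) - 1) := by
    simpa only [neg_mul] using hθ
  have hbdd : BddBelow {r : ℝ | ∃ h : ℕ → ℝ, Real.sqrt (∑' i : ℕ, (h i - θ₀ i) ^ 2) ≤ ε ∧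
      r = ∑' i : ℕ, ((i : ℝ) + 1) ^ (2 * α + 1) * h i ^ 2} := by
    refine ⟨0, ?_⟩
    rintro _ ⟨h, -, rfl⟩
    exact tsum_nonneg fun i => by positivity
  have hexp : -(2 * α - 2 * β + 1) / β = -(2 * (2 * α + 1 - 2 * β) / (2 * β)) := by
    field_simp; ring
  calc _ ≤ _ := csInf_le hbdd
        ⟨_, sqrt_tsum_sq_truncation_truncationLevel_sub_le hL hs hε hθ', rfl⟩
    _ ≤ _ := tsum_rpow_mul_sq_truncation_truncationLevel_le hL hs (by linarith) hε hθ'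
    _ = _ := by rw [hexp]; field_simp

/-- If `θ₀` lies in the hyperrectangle `H_∞(β,L)` (coordinates indexed from 1)
with `0 < β < α + 1/2`, then for every `ε ∈ (0,1)`,
`inf{τ²‖h‖²_{H^{α,τ}} : ‖h−θ₀‖₂ ≤ ε} ≤ C L^{(2α+1)/(2β)} ε^{-(2α-2β+1)/β}/(2α+1-2β)`,
with a constant `C` depending only on `α, β`. -/
theorem stmt_6 (α β : ℝ) (hα : 0 < α) (hβ : 0 < β) (hβα : β < α + 1 / 2) :
    ∃ C : ℝ, 0 < C ∧
      ∀ (L ε : ℝ), 0 < L → 0 < ε → ε < 1 →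
      ∀ θ₀ : ℕ → ℝ, (∀ i : ℕ, θ₀ i ^ 2 ≤ L * ((i : ℝ) + 1) ^ (-2 * β - 1)) →
        sInf {r : ℝ | ∃ h : ℕ → ℝ,
              Real.sqrt (∑' i : ℕ, (h i - θ₀ i) ^ 2) ≤ ε ∧
              r = ∑' i : ℕ, ((i : ℝ) + 1) ^ (2 * α + 1) * h i ^ 2}
          ≤ C * L ^ ((2 * α + 1) / (2 * β)) * ε ^ (-(2 * α - 2 * β + 1) / β)
              / (2 * α + 1 - 2 * β) :=
  stmt_6_general α β hβ hβα
end

section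
/- Let f_θ(x) = exp(∑_{j≥1} θ_j φ_j(x) − c(θ)) on [0,1] with (φ_j) an orthonormal system bounded by ‖φ‖_∞, and f₀ = f_{θ₀}. If ‖θ − θ₀‖₁ < ∞, then the Kullback–Leibler divergence satisfies K(f₀, f_θ) ≤ ‖f₀‖_∞ · e^{‖φ‖_∞ ‖θ−θ₀‖₁} · ‖θ − θ₀‖₂². -/
open MeasureTheory Real Set

noncomputable section

/-- `∑_j θ_j φ_j(x)` -/
def linSum (φ : ℕ → ℝ → ℝ) (θ : ℕ → ℝ) (x : ℝ) : ℝ := ∑' j : ℕ, θ j * φ j x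

/-- normalizing constant `c(θ)` of the log-linear density model. -/
def cConst (φ : ℕ → ℝ → ℝ) (θ : ℕ → ℝ) : ℝ :=
  Real.log (∫ x in Set.Icc (0 : ℝ) 1, Real.exp (linSum φ θ x))

/-- the density `f_θ = exp(∑_j θ_j φ_j − c(θ))`. -/
def fdens (φ : ℕ → ℝ → ℝ) (θ : ℕ → ℝ) (x : ℝ) : ℝ :=
  Real.exp (linSum φ θ x - cConst φ θ)

/-
Write `D = ∑_j (θ_j - θ₀_j) φ_j`, a bounded function since `θ - θ₀ ∈ ℓ¹`. Then
`log (f₀ / f_θ) = c(θ) - c(θ₀) - D` and `c(θ) - c(θ₀) = log ∫ f₀ e^D`, so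
`K(f₀, f_θ) = log ∫ f₀ e^D - ∫ f₀ D ≤ ∫ f₀ (e^D - 1 - D)` by `log y ≤ y - 1` and `∫ f₀ = 1`.
The elementary bound `e^t - 1 - t ≤ t² e^|t|` and `f₀ ≤ ‖f₀‖_∞` leave `‖f₀‖_∞ e^{‖D‖_∞} ∫ D²`,
and `∫ D² = ‖θ - θ₀‖₂²` by orthonormality (Parseval for an absolutely summable expansion).
-/

theorem exp_sub_one_sub_le_sq_mul_exp_abs (t : ℝ) : exp t - 1 - t ≤ t ^ 2 * exp |t| := by
  -- the tangent line of `exp` at `t` lies below `exp` at `0`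
  have tangent : exp t * (1 - t) ≤ 1 :=
    calc exp t * (1 - t) ≤ exp t * exp (-t) := by
          gcongr
          linarith [add_one_le_exp (-t)]
      _ = 1 := by rw [← exp_add, add_neg_cancel, exp_zero]
  rcases le_total 0 t with ht | ht
  · rw [abs_of_nonneg ht]
    nlinarith [mul_le_mul_of_nonneg_left (show exp t - 1 ≤ t * exp t by linarith) ht]
  · rw [abs_of_nonpos ht]
    nlinarith [add_one_le_exp t, one_le_exp (neg_nonneg.2 ht), sq_nonneg t]

theorem tsum_ite_fst_eq_snd {ι α : Type*} [DecidableEq ι] [AddCommMonoid α] [TopologicalSpace α]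
    (g : ι → α) :
    ∑' p : ι × ι, (if p.1 = p.2 then g p.1 else 0) = ∑' i, g i := by
  have h_inj : Function.Injective fun i : ι => (i, i) := fun _ _ h => congrArg Prod.fst h
  have h_supp : Function.support (fun p : ι × ι => if p.1 = p.2 then g p.1 else 0) ⊆
      range fun i => (i, i) := by
    rintro ⟨i, j⟩ hp
    obtain ⟨rfl, -⟩ : i = j ∧ _ := ite_ne_right_iff.1 hp
    exact ⟨i, rfl⟩
  rw [← h_inj.tsum_eq h_supp]
  simp

section BoundedSystem

variable {φ : ℕ → ℝ → ℝ} {M : ℝ} {θ η : ℕ → ℝ}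

theorem norm_mul_apply_le (hφ : ∀ j x, |φ j x| ≤ M) (j : ℕ) (x : ℝ) :
    ‖η j * φ j x‖ ≤ M * |η j| := by
  rw [norm_mul, norm_eq_abs, norm_eq_abs, mul_comm M]
  exact mul_le_mul_of_nonneg_left (hφ j x) (abs_nonneg _)

theorem summable_norm_mul_apply (hφ : ∀ j x, |φ j x| ≤ M) (hη : Summable fun j => |η j|)
    (x : ℝ) : Summable fun j => ‖η j * φ j x‖ :=
  (hη.mul_left M).of_nonneg_of_le (fun _ => norm_nonneg _) (norm_mul_apply_le hφ · x)

theorem abs_linSum_le (hφ : ∀ j x, |φ j x| ≤ M) (hη : Summable fun j => |η j|) (x : ℝ) :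
    |linSum φ η x| ≤ M * ∑' j, |η j| := by
  rw [← tsum_mul_left]
  exact tsum_of_norm_bounded (hη.mul_left M).hasSum (norm_mul_apply_le hφ · x)

theorem measurable_linSum (hφ_meas : ∀ j, Measurable (φ j)) (hφ : ∀ j x, |φ j x| ≤ M)
    (hη : Summable fun j => |η j|) : Measurable (linSum φ η) := by
  refine measurable_of_tendsto_metrizable' Filter.atTop
    (fun n => Finset.measurable_sum (Finset.range n) fun j _ => (hφ_meas j).const_mul (η j))
    (tendsto_pi_nhds.2 fun x => ?_)
  exact (summable_norm_mul_apply hφ hη x).of_norm.hasSum.tendsto_sum_nat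

theorem linSum_add (hφ : ∀ j x, |φ j x| ≤ M) (hθ : Summable fun j => |θ j|)
    (hη : Summable fun j => |η j|) (x : ℝ) :
    linSum φ (θ + η) x = linSum φ θ x + linSum φ η x := by
  simp only [linSum, Pi.add_apply, add_mul]
  exact (summable_norm_mul_apply hφ hθ x).of_norm.tsum_add (summable_norm_mul_apply hφ hη x).of_norm

theorem integral_linSum_sq {μ : Measure ℝ} [IsFiniteMeasure μ] (hφ_meas : ∀ j, Measurable (φ j))
    (hφ : ∀ j x, |φ j x| ≤ M)
    (hφ_on : ∀ i j, ∫ x, φ i x * φ j x ∂μ = if i = j then 1 else 0)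
    (hη : Summable fun j => |η j|) :
    ∫ x, linSum φ η x ^ 2 ∂μ = ∑' j, η j ^ 2 := by
  set F : ℕ × ℕ → ℝ → ℝ := fun p x => (η p.1 * φ p.1 x) * (η p.2 * φ p.2 x)
  have hF_le : ∀ p x, ‖F p x‖ ≤ M * |η p.1| * (M * |η p.2|) := fun p x => by
    rw [norm_mul]
    exact mul_le_mul (norm_mul_apply_le hφ _ x) (norm_mul_apply_le hφ _ x) (norm_nonneg _)
      ((norm_nonneg _).trans (norm_mul_apply_le hφ _ x))
  have hF_int : ∀ p, Integrable (F p) μ := fun p =>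
    .of_bound (by fun_prop) _ (ae_of_all _ (hF_le p))
  have hF_sum : Summable fun p => ∫ x, ‖F p x‖ ∂μ := by
    have hMη : Summable fun j => M * |η j| := hη.mul_left M
    have hMη_nonneg : 0 ≤ fun j => M * |η j| := fun j =>
      (norm_nonneg _).trans (norm_mul_apply_le hφ j 0)
    refine ((hMη.mul_of_nonneg hMη hMη_nonneg hMη_nonneg).mul_left (μ.real univ)).of_nonneg_of_le
      (fun p => integral_nonneg fun _ => norm_nonneg _) fun p => ?_
    simpa using integral_mono (hF_int p).norm (integrable_const _) (hF_le p)
  have hF_integral : ∀ p, ∫ x, F p x ∂μ = if p.1 = p.2 then η p.1 ^ 2 else 0 := by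
    rintro ⟨i, j⟩
    have hF_eq : ∀ x, F (i, j) x = η i * η j * (φ i x * φ j x) := fun x => mul_mul_mul_comm ..
    rw [funext hF_eq, integral_const_mul, hφ_on]
    split_ifs with h <;> simp [h, sq]
  calc ∫ x, linSum φ η x ^ 2 ∂μ = ∫ x, ∑' p, F p x ∂μ := by
        congr with x
        exact (sq _).trans (tsum_mul_tsum_of_summable_norm (summable_norm_mul_apply hφ hη x)
          (summable_norm_mul_apply hφ hη x))
    _ = ∑' p, ∫ x, F p x ∂μ := (integral_tsum_of_summable_integral_norm hF_int hF_sum).symm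
    _ = ∑' j, η j ^ 2 := (tsum_congr hF_integral).trans (tsum_ite_fst_eq_snd (η · ^ 2))

end BoundedSystem

theorem log_integral_mul_exp_sub_integral_mul_le {α : Type*} [MeasurableSpace α]
    {μ : Measure α} [IsFiniteMeasure μ] {f D : α → ℝ} {S B : ℝ} (hf_meas : Measurable f)
    (hf_nonneg : ∀ x, 0 ≤ f x) (hf_le : ∀ᵐ x ∂μ, f x ≤ S) (hf_int : ∫ x, f x ∂μ = 1)
    (hD_meas : Measurable D) (hD_le : ∀ x, |D x| ≤ B) :
    log (∫ x, f x * exp (D x) ∂μ) - ∫ x, f x * D x ∂μ ≤ S * exp B * ∫ x, D x ^ 2 ∂μ := by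
  have hf : Integrable f μ := .of_bound hf_meas.aestronglyMeasurable S
    (hf_le.mono fun x hx => by rwa [norm_of_nonneg (hf_nonneg x)])
  have hfe : Integrable (fun x => f x * exp (D x)) μ :=
    hf.mul_bdd hD_meas.exp.aestronglyMeasurable (c := exp B) (ae_of_all _ fun x => by
      rw [norm_of_nonneg (exp_pos _).le]
      exact exp_le_exp.2 (le_of_abs_le (hD_le x)))
  have hfD : Integrable (fun x => f x * D x) μ :=
    hf.mul_bdd hD_meas.aestronglyMeasurable (ae_of_all _ hD_le)
  have hD2 : Integrable (fun x => D x ^ 2) μ :=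
    .of_bound (hD_meas.pow_const 2).aestronglyMeasurable (B ^ 2) (ae_of_all _ fun x => by
      rw [norm_pow, norm_eq_abs]
      exact pow_le_pow_left₀ (abs_nonneg _) (hD_le x) 2)
  have hpos : 0 < ∫ x, f x * exp (D x) ∂μ :=
    calc 0 < exp (-B) := exp_pos _
      _ = ∫ x, f x * exp (-B) ∂μ := by rw [integral_mul_const, hf_int, one_mul]
      _ ≤ ∫ x, f x * exp (D x) ∂μ := integral_mono (hf.mul_const _) hfe fun x =>
          mul_le_mul_of_nonneg_left (exp_le_exp.2 (neg_le_of_abs_le (hD_le x))) (hf_nonneg x)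
  calc log (∫ x, f x * exp (D x) ∂μ) - ∫ x, f x * D x ∂μ
      ≤ (∫ x, f x * exp (D x) ∂μ) - 1 - ∫ x, f x * D x ∂μ := by
        linarith [log_le_sub_one_of_pos hpos]
    _ = ∫ x, (f x * exp (D x) - f x - f x * D x) ∂μ := by
        rw [integral_sub (f := fun x => f x * exp (D x) - f x) (hfe.sub hf) hfD,
          integral_sub hfe hf, hf_int]
    _ ≤ ∫ x, S * exp B * D x ^ 2 ∂μ := by
        refine integral_mono_ae ((hfe.sub hf).sub hfD) (hD2.const_mul _) (hf_le.mono fun x hx => ?_)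
        calc f x * exp (D x) - f x - f x * D x = f x * (exp (D x) - 1 - D x) := by ring
          _ ≤ f x * (D x ^ 2 * exp B) := by
            gcongr
            · exact hf_nonneg x
            · exact (exp_sub_one_sub_le_sq_mul_exp_abs _).trans (by gcongr; exact hD_le x)
          _ ≤ S * exp B * D x ^ 2 := by
            linarith [mul_le_mul_of_nonneg_left hx (by positivity : 0 ≤ D x ^ 2 * exp B)]
    _ = S * exp B * ∫ x, D x ^ 2 ∂μ := integral_const_mul _ _

section ExponentialFamily

variable {φ : ℕ → ℝ → ℝ} {M : ℝ} {θ θ₀ : ℕ → ℝ}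

theorem measurable_fdens (hφ_meas : ∀ j, Measurable (φ j)) (hφ : ∀ j x, |φ j x| ≤ M)
    (hθ : Summable fun j => |θ j|) : Measurable (fdens φ θ) :=
  ((measurable_linSum hφ_meas hφ hθ).sub_const _).exp

theorem integral_exp_linSum_pos (hφ_meas : ∀ j, Measurable (φ j)) (hφ : ∀ j x, |φ j x| ≤ M)
    (hθ : Summable fun j => |θ j|) : 0 < ∫ x in Icc (0 : ℝ) 1, exp (linSum φ θ x) := by
  have : NeZero (volume.restrict (Icc (0 : ℝ) 1)) := ⟨by simp⟩
  refine integral_exp_pos (.of_bound (measurable_linSum hφ_meas hφ hθ).exp.aestronglyMeasurable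
    (exp (M * ∑' j, |θ j|)) (ae_of_all _ fun x => ?_))
  rw [norm_of_nonneg (exp_pos _).le]
  exact exp_le_exp.2 (le_of_abs_le (abs_linSum_le hφ hθ x))

theorem integral_fdens (hφ_meas : ∀ j, Measurable (φ j)) (hφ : ∀ j x, |φ j x| ≤ M)
    (hθ : Summable fun j => |θ j|) : ∫ x in Icc (0 : ℝ) 1, fdens φ θ x = 1 := by
  simp_rw [fdens, exp_sub]
  rw [integral_div, cConst, exp_log (integral_exp_linSum_pos hφ_meas hφ hθ)]
  exact div_self (integral_exp_linSum_pos hφ_meas hφ hθ).ne'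

theorem fdens_le_sSup (hφ : ∀ j x, |φ j x| ≤ M) (hθ : Summable fun j => |θ j|) {x : ℝ}
    (hx : x ∈ Icc (0 : ℝ) 1) : fdens φ θ x ≤ sSup (fdens φ θ '' Icc (0 : ℝ) 1) := by
  refine le_csSup ⟨exp (M * ∑' j, |θ j| - cConst φ θ), ?_⟩ (mem_image_of_mem _ hx)
  rintro _ ⟨y, -, rfl⟩
  exact exp_le_exp.2 (sub_le_sub_right (le_of_abs_le (abs_linSum_le hφ hθ y)) _)

theorem linSum_eq_add_linSum_sub (hφ : ∀ j x, |φ j x| ≤ M) (hθ₀ : Summable fun j => |θ₀ j|)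
    (hθ : Summable fun j => |θ j - θ₀ j|) (x : ℝ) :
    linSum φ θ x = linSum φ θ₀ x + linSum φ (θ - θ₀) x := by
  rw [← linSum_add hφ hθ₀ (η := θ - θ₀) hθ, add_sub_cancel]

theorem cConst_sub_cConst (hφ_meas : ∀ j, Measurable (φ j)) (hφ : ∀ j x, |φ j x| ≤ M)
    (hθ₀ : Summable fun j => |θ₀ j|) (hθ : Summable fun j => |θ j - θ₀ j|) :
    cConst φ θ - cConst φ θ₀ =
      log (∫ x in Icc (0 : ℝ) 1, fdens φ θ₀ x * exp (linSum φ (θ - θ₀) x)) := by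
  have hθ_abs : Summable fun j => |θ j| := (hθ.add hθ₀).of_nonneg_of_le (fun _ => abs_nonneg _)
    fun j => by simpa using abs_add_le (θ j - θ₀ j) (θ₀ j)
  have h_tilt : ∀ x, fdens φ θ₀ x * exp (linSum φ (θ - θ₀) x) =
      exp (linSum φ θ x) / exp (cConst φ θ₀) := fun x => by
    rw [fdens, ← exp_add, ← exp_sub, linSum_eq_add_linSum_sub hφ hθ₀ hθ x]
    ring_nf
  simp_rw [h_tilt]
  rw [integral_div, log_div (integral_exp_linSum_pos hφ_meas hφ hθ_abs).ne' (exp_pos _).ne',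
    log_exp]
  rfl

theorem integral_fdens_mul_log_div_fdens (hφ_meas : ∀ j, Measurable (φ j))
    (hφ : ∀ j x, |φ j x| ≤ M) (hθ₀ : Summable fun j => |θ₀ j|)
    (hθ : Summable fun j => |θ j - θ₀ j|) :
    ∫ x in Icc (0 : ℝ) 1, fdens φ θ₀ x * log (fdens φ θ₀ x / fdens φ θ x) =
      log (∫ x in Icc (0 : ℝ) 1, fdens φ θ₀ x * exp (linSum φ (θ - θ₀) x)) -
        ∫ x in Icc (0 : ℝ) 1, fdens φ θ₀ x * linSum φ (θ - θ₀) x := by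
  have hf₀ : IntegrableOn (fdens φ θ₀) (Icc 0 1) :=
    .of_integral_ne_zero (by rw [integral_fdens hφ_meas hφ hθ₀]; exact one_ne_zero)
  have hf₀D : IntegrableOn (fun x => fdens φ θ₀ x * linSum φ (θ - θ₀) x) (Icc 0 1) :=
    hf₀.mul_bdd (measurable_linSum hφ_meas hφ hθ).aestronglyMeasurable
      (ae_of_all _ (abs_linSum_le hφ (η := θ - θ₀) hθ))
  have h_log : ∀ x, fdens φ θ₀ x * log (fdens φ θ₀ x / fdens φ θ x) =
      fdens φ θ₀ x * (cConst φ θ - cConst φ θ₀) - fdens φ θ₀ x * linSum φ (θ - θ₀) x :=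
    fun x => by
      rw [fdens, fdens, ← exp_sub, log_exp, linSum_eq_add_linSum_sub hφ hθ₀ hθ x]
      ring
  simp_rw [h_log]
  rw [integral_sub (hf₀.mul_const _) hf₀D, integral_mul_const, integral_fdens hφ_meas hφ hθ₀,
    one_mul, cConst_sub_cConst hφ_meas hφ hθ₀ hθ]

end ExponentialFamily

theorem stmt_8_general (φ : ℕ → ℝ → ℝ) (Mφ : ℝ)
    (hφ_meas : ∀ j, Measurable (φ j))
    (hφ_bdd : ∀ j x, |φ j x| ≤ Mφ)
    (hφ_on : ∀ i j : ℕ,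
      (∫ x in Set.Icc (0 : ℝ) 1, φ i x * φ j x) = if i = j then 1 else 0)
    (θ θ₀ : ℕ → ℝ)
    (hθ₀ : Summable fun j => |θ₀ j|)
    (hθ : Summable fun j => |θ j - θ₀ j|) :
    (∫ x in Set.Icc (0 : ℝ) 1,
        fdens φ θ₀ x * Real.log (fdens φ θ₀ x / fdens φ θ x))
      ≤ sSup (fdens φ θ₀ '' Set.Icc (0 : ℝ) 1) *
          Real.exp (Mφ * ∑' j : ℕ, |θ j - θ₀ j|) *
          ∑' j : ℕ, (θ j - θ₀ j) ^ 2 := by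
  have hD_le : ∀ x, |linSum φ (θ - θ₀) x| ≤ Mφ * ∑' j, |θ j - θ₀ j| :=
    abs_linSum_le hφ_bdd (η := θ - θ₀) hθ
  calc _ = log (∫ x in Icc (0 : ℝ) 1, fdens φ θ₀ x * exp (linSum φ (θ - θ₀) x)) -
        ∫ x in Icc (0 : ℝ) 1, fdens φ θ₀ x * linSum φ (θ - θ₀) x :=
        integral_fdens_mul_log_div_fdens hφ_meas hφ_bdd hθ₀ hθ
    _ ≤ sSup (fdens φ θ₀ '' Icc (0 : ℝ) 1) * exp (Mφ * ∑' j, |θ j - θ₀ j|) *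
        ∫ x in Icc (0 : ℝ) 1, linSum φ (θ - θ₀) x ^ 2 :=
        log_integral_mul_exp_sub_integral_mul_le (measurable_fdens hφ_meas hφ_bdd hθ₀)
          (fun _ => (exp_pos _).le)
          (ae_restrict_of_forall_mem measurableSet_Icc fun _ hx => fdens_le_sSup hφ_bdd hθ₀ hx)
          (integral_fdens hφ_meas hφ_bdd hθ₀) (measurable_linSum hφ_meas hφ_bdd hθ) hD_le
    _ = _ := by rw [integral_linSum_sq hφ_meas hφ_bdd hφ_on (η := θ - θ₀) hθ]; rfl

/-- In the infinite-dimensional exponential family on `[0,1]` with a uniformly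
bounded orthonormal system `(φ_j)`, if `‖θ − θ₀‖₁ < ∞` then
`K(f₀, f_θ) ≤ ‖f₀‖_∞ e^{‖φ‖_∞ ‖θ−θ₀‖₁} ‖θ−θ₀‖₂²`. -/
theorem stmt_8 (φ : ℕ → ℝ → ℝ) (Mφ : ℝ) (hMφ : 0 ≤ Mφ)
    (hφ_meas : ∀ j, Measurable (φ j))
    (hφ_bdd : ∀ j x, |φ j x| ≤ Mφ)
    (hφ_on : ∀ i j : ℕ,
      (∫ x in Set.Icc (0 : ℝ) 1, φ i x * φ j x) = if i = j then 1 else 0)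
    (θ θ₀ : ℕ → ℝ)
    (hθ₀ : Summable fun j => |θ₀ j|)
    (hθ : Summable fun j => |θ j - θ₀ j|) :
    (∫ x in Set.Icc (0 : ℝ) 1,
        fdens φ θ₀ x * Real.log (fdens φ θ₀ x / fdens φ θ x))
      ≤ sSup (fdens φ θ₀ '' Set.Icc (0 : ℝ) 1) *
          Real.exp (Mφ * ∑' j : ℕ, |θ j - θ₀ j|) *
          ∑' j : ℕ, (θ j - θ₀ j) ^ 2 :=
  stmt_8_general φ Mφ hφ_meas hφ_bdd hφ_on θ θ₀ hθ₀ hθ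

end
end

section
/- Let f₀ be a density on [0,1] with 0 < c₀ ≤ f₀ ≤ C₀. For a histogram density f_θ = k∑_{j=1}^k θ_j 1_{I_j} with θ in the k-simplex and I_j = ((j−1)/k, j/k], one has h²(f₀, f_θ) = b(k)² + ∑_{j=1}^k (√θ_j − η̃_j √k)², where η̃_j = ∫_{I_j} √f₀ and b(k)² = ∑_j ∫_{I_j} (√f₀ − η̃_j k)² dx = 1 − k ∑_j η̃_j². In particular h²(f₀, f_θ) ≥ b(k)² for every θ in the simplex. -/
open MeasureTheory Real Set

noncomputable section


/-- the `j`-th cell `I_j = ((j-1)/k, j/k]` of the regular `k`-grid (here `j : Fin k`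
represents the cell with index `j+1`). -/
def cell (k : ℕ) (j : Fin k) : Set ℝ := Set.Ioc ((j : ℝ) / k) (((j : ℝ) + 1) / k)

/-- the histogram density `f_θ = k ∑_j θ_j 1_{I_j}`. -/
def histDens (k : ℕ) (θ : Fin k → ℝ) (x : ℝ) : ℝ :=
  (k : ℝ) * ∑ j : Fin k, (cell k j).indicator (fun _ => θ j) x

/-!
On each cell `I_j` the histogram is the constant `k θ_j`, so with `g = √f₀` the Hellinger
integrand there is `(g - c)²` for a constant `c = √(k θ_j)`. The L² Pythagoras identity
`∫_I (g - c)² = ∫_I (g - ⨍_I g)² + |I| (⨍_I g - c)²`, with `|I| = 1/k` and `⨍_I g = k η̃_j`,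
splits it into the projection error plus `(√θ_j - η̃_j √k)²`. The case `c = 0`, summed over the
cells, together with `∫ f₀ = 1` gives `b(k)² = 1 - k ∑ η̃_j²`. Integrability comes from
`∫ f₀ = 1 ≠ 0`, which forces `f₀` to be integrable, i.e. `√f₀ ∈ L²`.
-/

section Pythagoras

variable {α : Type*} [MeasurableSpace α] {μ : Measure α} [IsFiniteMeasure μ] {g : α → ℝ}

theorem integral_sub_const_sq (hg : MemLp g 2 μ) (c : ℝ) :
    ∫ x, (g x - c) ^ 2 ∂μ = ∫ x, g x ^ 2 ∂μ - 2 * c * ∫ x, g x ∂μ + μ.real univ * c ^ 2 := by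
  have hg₁ : Integrable g μ := hg.integrable one_le_two
  calc ∫ x, (g x - c) ^ 2 ∂μ = ∫ x, ((g x ^ 2 - 2 * c * g x) + c ^ 2) ∂μ :=
        integral_congr_ae (.of_forall fun x => by ring)
    _ = (∫ x, g x ^ 2 ∂μ - ∫ x, 2 * c * g x ∂μ) + ∫ _, c ^ 2 ∂μ := by
      have hlin : Integrable (fun x => g x ^ 2 - 2 * c * g x) μ :=
        hg.integrable_sq.sub (hg₁.const_mul _)
      rw [integral_add hlin (integrable_const _), integral_sub hg.integrable_sq (hg₁.const_mul _)]
    _ = _ := by rw [integral_const_mul, integral_const, smul_eq_mul]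

theorem integral_sub_const_sq_eq_add_average (hg : MemLp g 2 μ) (c : ℝ) :
    ∫ x, (g x - c) ^ 2 ∂μ
      = ∫ x, (g x - ⨍ y, g y ∂μ) ^ 2 ∂μ + μ.real univ * (⨍ y, g y ∂μ - c) ^ 2 := by
  rw [integral_sub_const_sq hg, integral_sub_const_sq hg, ← measure_smul_average μ g, smul_eq_mul]
  ring

end Pythagoras

theorem MeasureTheory.Integrable.memLp_two_sqrt {α : Type*} [MeasurableSpace α] {μ : Measure α}
    {f : α → ℝ} (hf : Integrable f μ) (hf₀ : 0 ≤ᵐ[μ] f) : MemLp (fun x => √(f x)) 2 μ :=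
  (memLp_two_iff_integrable_sq (continuous_sqrt.comp_aestronglyMeasurable hf.1)).2 <|
    hf.congr (hf₀.mono fun _ hx => (sq_sqrt hx).symm)

section Cell

variable {k : ℕ}

theorem measurableSet_cell (j : Fin k) : MeasurableSet (cell k j) := measurableSet_Ioc

instance (j : Fin k) : IsFiniteMeasure (volume.restrict (cell k j)) := by
  unfold cell; infer_instance

theorem cell_subset_Ioc (j : Fin k) : cell k j ⊆ Ioc 0 1 := by
  have hk : (0 : ℝ) < k := by exact_mod_cast j.pos
  have hj : (j : ℝ) + 1 ≤ k := by exact_mod_cast j.isLt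
  exact Ioc_subset_Ioc (by positivity) ((div_le_one hk).2 hj)

theorem pairwise_disjoint_cell (k : ℕ) : Pairwise (Function.onFun Disjoint (cell k)) := by
  have hmono : Monotone fun n : ℕ => (n : ℝ) / k := fun _ _ h =>
    div_le_div_of_nonneg_right (Nat.cast_le.2 h) k.cast_nonneg
  have h := hmono.pairwise_disjoint_on_Ioc_succ.comp_of_injective (Fin.val_injective (n := k))
  simp only [Order.succ_eq_add_one, Nat.cast_add_one] at h
  exact h

theorem iUnion_cell (hk : 0 < k) : ⋃ j, cell k j = Ioc 0 1 := by
  refine (iUnion_subset cell_subset_Ioc).antisymm fun x hx => ?_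
  have hcover := Ioc_subset_biUnion_Ioc k (fun n : ℕ => (n : ℝ) / k) (by simpa [hk.ne'] using hx)
  obtain ⟨i, hi, hxi⟩ := mem_iUnion₂.1 hcover
  exact mem_iUnion.2 ⟨⟨i, Finset.mem_range.1 hi⟩, by simpa [cell] using hxi⟩

theorem measureReal_cell (j : Fin k) : volume.real (cell k j) = (k : ℝ)⁻¹ := by
  have hk : (0 : ℝ) < k := by exact_mod_cast j.pos
  rw [cell, Real.volume_real_Ioc_of_le (by gcongr; linarith)]
  field_simp
  ring

theorem setIntegral_Ioc_eq_sum_cell (hk : 0 < k) {F : ℝ → ℝ}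
    (hF : ∀ j, IntegrableOn F (cell k j)) : ∫ x in Ioc 0 1, F x = ∑ j, ∫ x in cell k j, F x := by
  rw [← iUnion_cell hk, integral_iUnion_fintype measurableSet_cell (pairwise_disjoint_cell k) hF]

theorem histDens_of_mem_cell (θ : Fin k → ℝ) {j : Fin k} {x : ℝ} (hx : x ∈ cell k j) :
    histDens k θ x = k * θ j := by
  rw [histDens]
  congr 1
  refine (Finset.sum_eq_single j (fun i _ hij => indicator_of_notMem
    (disjoint_left.1 (pairwise_disjoint_cell k hij).symm hx) _) (by simp)).trans ?_
  exact indicator_of_mem hx _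

theorem setAverage_cell (g : ℝ → ℝ) (j : Fin k) :
    ⨍ x in cell k j, g x = (∫ x in cell k j, g x) * k := by
  rw [setAverage_eq, measureReal_cell, inv_inv, smul_eq_mul, mul_comm]

variable {g : ℝ → ℝ} {j : Fin k}

theorem integral_cell_sub_const_sq (hg : MemLp g 2 (volume.restrict (cell k j))) (c : ℝ) :
    ∫ x in cell k j, (g x - c) ^ 2
      = (∫ x in cell k j, (g x - (∫ y in cell k j, g y) * k) ^ 2)
        + ((∫ y in cell k j, g y) * k - c) ^ 2 / k := by
  rw [integral_sub_const_sq_eq_add_average hg, setAverage_cell, measureReal_restrict_apply_univ,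
    measureReal_cell, inv_mul_eq_div]

theorem integral_cell_sub_mean_sq (hg : MemLp g 2 (volume.restrict (cell k j))) :
    ∫ x in cell k j, (g x - (∫ y in cell k j, g y) * k) ^ 2
      = (∫ x in cell k j, g x ^ 2) - k * (∫ y in cell k j, g y) ^ 2 := by
  have hk : (k : ℝ) ≠ 0 := by exact_mod_cast j.pos.ne'
  have h := integral_cell_sub_const_sq hg 0
  simp only [sub_zero] at h
  rw [h]
  field_simp
  ring

theorem integrableOn_cell_sub_sqrt_histDens_sq (θ : Fin k → ℝ)
    (hg : MemLp g 2 (volume.restrict (cell k j))) :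
    IntegrableOn (fun x => (g x - √(histDens k θ x)) ^ 2) (cell k j) :=
  IntegrableOn.congr_fun (hg.sub (memLp_const √(k * θ j))).integrable_sq
    (fun x hx => by simp [histDens_of_mem_cell θ hx]) (measurableSet_cell j)

theorem integral_cell_sub_sqrt_histDens_sq (θ : Fin k → ℝ)
    (hg : MemLp g 2 (volume.restrict (cell k j))) :
    ∫ x in cell k j, (g x - √(histDens k θ x)) ^ 2
      = (∫ x in cell k j, (g x - (∫ y in cell k j, g y) * k) ^ 2)
        + (√(θ j) - (∫ y in cell k j, g y) * √k) ^ 2 := by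
  have hk : (k : ℝ) ≠ 0 := by exact_mod_cast j.pos.ne'
  have hsqrt_k := sq_sqrt k.cast_nonneg
  rw [setIntegral_congr_fun (measurableSet_cell j)
      (fun x hx => by rw [histDens_of_mem_cell θ hx]), integral_cell_sub_const_sq hg,
    sqrt_mul k.cast_nonneg]
  congr 1
  rw [div_eq_iff hk]
  linear_combination (√(θ j) ^ 2 - (∫ y in cell k j, g y) ^ 2 * k) * hsqrt_k

end Cell

theorem stmt_11_general (k : ℕ) (hk : 0 < k) (f₀ : ℝ → ℝ)
    (c₀ C₀ : ℝ) (hc₀ : 0 < c₀)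
    (hbound : ∀ x ∈ Set.Ioc (0 : ℝ) 1, c₀ ≤ f₀ x ∧ f₀ x ≤ C₀)
    (hprob : (∫ x in Set.Ioc (0 : ℝ) 1, f₀ x) = 1)
    (θ : Fin k → ℝ) :
    (∫ x in Set.Ioc (0 : ℝ) 1,
        (Real.sqrt (f₀ x) - Real.sqrt (histDens k θ x)) ^ 2)
      = (∑ j : Fin k, ∫ x in cell k j,
            (Real.sqrt (f₀ x) - (∫ y in cell k j, Real.sqrt (f₀ y)) * k) ^ 2)
        + ∑ j : Fin k,
            (Real.sqrt (θ j) - (∫ y in cell k j, Real.sqrt (f₀ y)) * Real.sqrt k) ^ 2 ∧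
    (∑ j : Fin k, ∫ x in cell k j,
        (Real.sqrt (f₀ x) - (∫ y in cell k j, Real.sqrt (f₀ y)) * k) ^ 2)
      = 1 - (k : ℝ) * ∑ j : Fin k, (∫ y in cell k j, Real.sqrt (f₀ y)) ^ 2 ∧
    (∑ j : Fin k, ∫ x in cell k j,
        (Real.sqrt (f₀ x) - (∫ y in cell k j, Real.sqrt (f₀ y)) * k) ^ 2)
      ≤ ∫ x in Set.Ioc (0 : ℝ) 1,
          (Real.sqrt (f₀ x) - Real.sqrt (histDens k θ x)) ^ 2 := by
  have hf₀ : ∀ x ∈ Ioc (0 : ℝ) 1, 0 ≤ f₀ x := fun x hx => hc₀.le.trans (hbound x hx).1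
  have hL2 : MemLp (fun x => √(f₀ x)) 2 (volume.restrict (Ioc 0 1)) :=
    (Integrable.of_integral_ne_zero (by rw [hprob]; exact one_ne_zero)).memLp_two_sqrt
      (ae_restrict_of_forall_mem measurableSet_Ioc hf₀)
  have hL2_cell (j : Fin k) : MemLp (fun x => √(f₀ x)) 2 (volume.restrict (cell k j)) :=
    hL2.mono_measure (Measure.restrict_mono (cell_subset_Ioc j) le_rfl)
  have hmass : ∑ j, ∫ x in cell k j, √(f₀ x) ^ 2 = 1 := by
    rw [← setIntegral_Ioc_eq_sum_cell hk fun j => (hL2_cell j).integrable_sq,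
      setIntegral_congr_fun measurableSet_Ioc fun x hx => sq_sqrt (hf₀ x hx), hprob]
  have hpythagoras : ∫ x in Ioc 0 1, (√(f₀ x) - √(histDens k θ x)) ^ 2
      = (∑ j, ∫ x in cell k j, (√(f₀ x) - (∫ y in cell k j, √(f₀ y)) * k) ^ 2)
        + ∑ j, (√(θ j) - (∫ y in cell k j, √(f₀ y)) * √k) ^ 2 := by
    rw [setIntegral_Ioc_eq_sum_cell hk
        fun j => integrableOn_cell_sub_sqrt_histDens_sq θ (hL2_cell j), ← Finset.sum_add_distrib]
    exact Finset.sum_congr rfl fun j _ => integral_cell_sub_sqrt_histDens_sq θ (hL2_cell j)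
  refine ⟨hpythagoras, ?_, ?_⟩
  · rw [Finset.sum_congr rfl fun j _ => integral_cell_sub_mean_sq (hL2_cell j),
      Finset.sum_sub_distrib, hmass, Finset.mul_sum]
  · rw [hpythagoras]
    exact le_add_of_nonneg_right (Finset.sum_nonneg fun j _ => sq_nonneg _)

/-- Pythagoras identity for the Hellinger distance between a density
`c₀ ≤ f₀ ≤ C₀` on `[0,1]` and any histogram `f_θ`, `θ` in the `k`-simplex:
`h²(f₀,f_θ) = b(k)² + ∑_j (√θ_j − η̃_j √k)²` with `η̃_j = ∫_{I_j} √f₀` and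
`b(k)² = ∑_j ∫_{I_j}(√f₀ − η̃_j k)² = 1 − k ∑_j η̃_j²`; in particular `h² ≥ b(k)²`. -/
theorem stmt_11 (k : ℕ) (hk : 0 < k) (f₀ : ℝ → ℝ) (hmeas : Measurable f₀)
    (c₀ C₀ : ℝ) (hc₀ : 0 < c₀)
    (hbound : ∀ x ∈ Set.Ioc (0 : ℝ) 1, c₀ ≤ f₀ x ∧ f₀ x ≤ C₀)
    (hprob : (∫ x in Set.Ioc (0 : ℝ) 1, f₀ x) = 1)
    (θ : Fin k → ℝ) (hθ_nonneg : ∀ j, 0 ≤ θ j) (hθ_sum : ∑ j, θ j = 1) :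
    (∫ x in Set.Ioc (0 : ℝ) 1,
        (Real.sqrt (f₀ x) - Real.sqrt (histDens k θ x)) ^ 2)
      = (∑ j : Fin k, ∫ x in cell k j,
            (Real.sqrt (f₀ x) - (∫ y in cell k j, Real.sqrt (f₀ y)) * k) ^ 2)
        + ∑ j : Fin k,
            (Real.sqrt (θ j) - (∫ y in cell k j, Real.sqrt (f₀ y)) * Real.sqrt k) ^ 2 ∧
    (∑ j : Fin k, ∫ x in cell k j,
        (Real.sqrt (f₀ x) - (∫ y in cell k j, Real.sqrt (f₀ y)) * k) ^ 2)
      = 1 - (k : ℝ) * ∑ j : Fin k, (∫ y in cell k j, Real.sqrt (f₀ y)) ^ 2 ∧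
    (∑ j : Fin k, ∫ x in cell k j,
        (Real.sqrt (f₀ x) - (∫ y in cell k j, Real.sqrt (f₀ y)) * k) ^ 2)
      ≤ ∫ x in Set.Ioc (0 : ℝ) 1,
          (Real.sqrt (f₀ x) - Real.sqrt (histDens k θ x)) ^ 2 :=
  stmt_11_general k hk f₀ c₀ C₀ hc₀ hbound hprob θ
end
end

section
/- In the fixed-design Gaussian regression model with noise variance σ², for each θ ∈ ℝ^n the likelihood-ratio test φ_n(θ) = 1{‖x − F θ‖² ≤ ‖x − F θ₀‖²} (F the design matrix with orthonormal columns in the empirical norm) satisfies E_{θ₀}[φ_n(θ)] ≤ exp(−n‖θ−θ₀‖₂²/(8σ²)) and sup over θ' with ‖θ'−θ‖₂ ≤ ‖θ−θ₀‖₂/18 of E_{θ'}[1−φ_n(θ)] ≤ exp(−c n‖θ−θ₀‖₂²) for an absolute constant c > 0 (depending on σ). -/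
/-!
With `u = F (θ - θ₀)`, the acceptance region of the test is the half-space
`{x | u ⬝ᵥ x ≥ u ⬝ᵥ F (θ + θ₀) / 2}`, and under the parameter `η` the statistic `u ⬝ᵥ x` is
Gaussian with mean `u ⬝ᵥ F η` and variance `σ² ‖u‖² = σ² n ‖θ - θ₀‖²`. Both error probabilities
are therefore Gaussian tails, bounded by Chernoff's inequality. Under `θ₀` the threshold lies
`‖u‖² / 2` above the mean; under `θ'` with `‖θ' - θ‖ ≤ ‖θ - θ₀‖ / 18`, Cauchy–Schwarz puts the
mean at least `(4/9) ‖u‖²` above the threshold, which gives `c = 8 / (81 σ²)`.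
-/

open MeasureTheory ProbabilityTheory Real
open scoped NNReal

lemma gaussianReal_real_Ici_le (μ : ℝ) (v : ℝ≥0) (b : ℝ) {t : ℝ} (ht : 0 ≤ t) :
    (gaussianReal μ v).real (Set.Ici b) ≤ exp (-t * (b - μ) + v * t ^ 2 / 2) := by
  have h := measure_ge_le_exp_mul_mgf (X := id) b ht
    (integrable_exp_mul_gaussianReal (μ := μ) (v := v) t)
  rw [mgf_id_gaussianReal, ← exp_add] at h
  exact h.trans_eq (by ring_nf)

lemma gaussianReal_real_Iic_le (μ : ℝ) (v : ℝ≥0) (b : ℝ) {t : ℝ} (ht : 0 ≤ t) :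
    (gaussianReal μ v).real (Set.Iic b) ≤ exp (-t * (μ - b) + v * t ^ 2 / 2) := by
  have h := measure_le_le_exp_mul_mgf (X := id) b (neg_nonpos.2 ht)
    (integrable_exp_mul_gaussianReal (μ := μ) (v := v) (-t))
  rw [mgf_id_gaussianReal, ← exp_add] at h
  exact h.trans_eq (by ring_nf)

lemma map_pi_gaussianReal_dotProduct {ι : Type*} [Fintype ι] (m : ι → ℝ) (v : ℝ≥0)
    (u : ι → ℝ) :
    (Measure.pi fun i ↦ gaussianReal (m i) v).map (u ⬝ᵥ ·)
      = gaussianReal (u ⬝ᵥ m) (v * (u ⬝ᵥ u)).toNNReal := by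
  have hsum : (u ⬝ᵥ ·) = ∑ i, fun x : ι → ℝ ↦ u i * x i := by
    ext x; simp [dotProduct]
  have hlaw : HasGaussianLaw (u ⬝ᵥ ·) (Measure.pi fun i ↦ gaussianReal (m i) v) := by
    rw [hsum]
    refine iIndepFun.hasGaussianLaw_sum (fun i ↦ ?_) (iIndepFun_pi (X := fun i y ↦ u i * y)
      fun i ↦ by fun_prop)
    exact (HasLaw.hasGaussianLaw (X := fun x : ι → ℝ ↦ x i) (μ := gaussianReal (m i) v)
      ⟨(measurable_pi_apply i).aemeasurable, (measurePreserving_eval _ i).map_eq⟩).fun_smul (u i)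
  have hmean : ∀ i, ∫ x, x i ∂(Measure.pi fun i ↦ gaussianReal (m i) v) = m i := fun i ↦ by
    rw [integral_comp_eval (μ := fun i ↦ gaussianReal (m i) v) (f := fun y ↦ y)
      aestronglyMeasurable_id, integral_id_gaussianReal]
  have hint : ∀ i, Integrable (fun x : ι → ℝ ↦ x i) (Measure.pi fun i ↦ gaussianReal (m i) v) :=
    fun i ↦ integrable_comp_eval (i := i) (f := fun y ↦ y)
      ((memLp_id_gaussianReal 1).integrable le_rfl)
  rw [hlaw.map_eq_gaussianReal]
  congr 1
  · simp only [dotProduct]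
    rw [integral_finsetSum _ fun i _ ↦ (hint i).const_mul _]
    simp only [integral_const_mul, hmean]
  · rw [hsum, variance_sum_pi (X := fun i y ↦ u i * y)
      fun i ↦ (memLp_id_gaussianReal 2).const_mul _]
    simp only [variance_const_mul (X := fun y ↦ y), variance_fun_id_gaussianReal, dotProduct,
      Finset.mul_sum]
    congr 1
    exact Finset.sum_congr rfl fun i _ ↦ by ring

lemma dotProduct_self_nonneg {ι : Type*} [Fintype ι] (a : ι → ℝ) : 0 ≤ a ⬝ᵥ a :=
  Finset.sum_nonneg fun i _ ↦ mul_self_nonneg (a i)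

lemma pi_gaussianReal_real_dotProduct_preimage_Ici_le {ι : Type*} [Fintype ι] (m : ι → ℝ)
    (v : ℝ≥0) (u : ι → ℝ) (b : ℝ) {t : ℝ} (ht : 0 ≤ t) :
    (Measure.pi fun i ↦ gaussianReal (m i) v).real ((u ⬝ᵥ ·) ⁻¹' Set.Ici b)
      ≤ exp (-t * (b - u ⬝ᵥ m) + v * (u ⬝ᵥ u) * t ^ 2 / 2) := by
  rw [← map_measureReal_apply (by fun_prop) measurableSet_Ici, map_pi_gaussianReal_dotProduct]
  refine (gaussianReal_real_Ici_le _ _ b ht).trans_eq ?_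
  rw [Real.coe_toNNReal]
  exact mul_nonneg v.2 (dotProduct_self_nonneg u)

lemma pi_gaussianReal_real_dotProduct_preimage_Iic_le {ι : Type*} [Fintype ι] (m : ι → ℝ)
    (v : ℝ≥0) (u : ι → ℝ) (b : ℝ) {t : ℝ} (ht : 0 ≤ t) :
    (Measure.pi fun i ↦ gaussianReal (m i) v).real ((u ⬝ᵥ ·) ⁻¹' Set.Iic b)
      ≤ exp (-t * (u ⬝ᵥ m - b) + v * (u ⬝ᵥ u) * t ^ 2 / 2) := by
  rw [← map_measureReal_apply (by fun_prop) measurableSet_Iic, map_pi_gaussianReal_dotProduct]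
  refine (gaussianReal_real_Iic_le _ _ b ht).trans_eq ?_
  rw [Real.coe_toNNReal]
  exact mul_nonneg v.2 (dotProduct_self_nonneg u)

lemma neg_mul_dotProduct_self_le_dotProduct {ι : Type*} [Fintype ι] {a b : ι → ℝ} {r : ℝ}
    (h : √(b ⬝ᵥ b) ≤ r * √(a ⬝ᵥ a)) : -(r * (a ⬝ᵥ a)) ≤ a ⬝ᵥ b := by
  have hcs : -(a ⬝ᵥ b) ≤ √(a ⬝ᵥ a) * √(b ⬝ᵥ b) := by
    simpa [dotProduct, sq] using Real.sum_mul_le_sqrt_mul_sqrt Finset.univ (-a) b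
  calc -(r * (a ⬝ᵥ a)) = -(√(a ⬝ᵥ a) * (r * √(a ⬝ᵥ a))) := by
        rw [mul_left_comm, Real.mul_self_sqrt (dotProduct_self_nonneg a)]
    _ ≤ -(√(a ⬝ᵥ a) * √(b ⬝ᵥ b)) :=
        neg_le_neg (mul_le_mul_of_nonneg_left h (Real.sqrt_nonneg _))
    _ ≤ a ⬝ᵥ b := by linarith

lemma dotProduct_map_map {ι κ : Type*} [Fintype ι] [Fintype κ] {c : ℝ}
    (F : (ι → ℝ) →ₗ[ℝ] (κ → ℝ)) (hF : ∀ v, F v ⬝ᵥ F v = c * (v ⬝ᵥ v)) (a b : ι → ℝ) :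
    F a ⬝ᵥ F b = c * (a ⬝ᵥ b) := by
  have h := hF (a + b)
  simp only [map_add, add_dotProduct, dotProduct_add, hF, dotProduct_comm b a,
    dotProduct_comm (F b) (F a)] at h
  linear_combination h / 2

noncomputable section

def regLaw (n : ℕ) (σ : ℝ) (F : (Fin n → ℝ) →ₗ[ℝ] (Fin n → ℝ))
    (θ : Fin n → ℝ) : Measure (Fin n → ℝ) :=
  Measure.pi fun i => gaussianReal (F θ i) (Real.toNNReal (σ ^ 2))

/-- acceptance region of the likelihood-ratio test `φ_n(θ) = 1{‖x−Fθ‖² ≤ ‖x−Fθ₀‖²}`. -/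
def testSet (n : ℕ) (F : (Fin n → ℝ) →ₗ[ℝ] (Fin n → ℝ))
    (θ₀ θ : Fin n → ℝ) : Set (Fin n → ℝ) :=
  {x | ∑ i, (x i - F θ i) ^ 2 ≤ ∑ i, (x i - F θ₀ i) ^ 2}

instance (n : ℕ) (σ : ℝ) (F : (Fin n → ℝ) →ₗ[ℝ] (Fin n → ℝ)) (θ : Fin n → ℝ) :
    IsProbabilityMeasure (regLaw n σ F θ) := by
  rw [regLaw]
  infer_instance

section

variable {n : ℕ} (σ : ℝ) (F : (Fin n → ℝ) →ₗ[ℝ] (Fin n → ℝ))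

lemma testSet_eq_preimage (θ₀ θ : Fin n → ℝ) :
    testSet n F θ₀ θ = (F (θ - θ₀) ⬝ᵥ ·) ⁻¹' Set.Ici (F (θ - θ₀) ⬝ᵥ F (θ + θ₀) / 2) := by
  ext x
  have hsq : ∀ a : Fin n → ℝ, ∑ i, (x i - a i) ^ 2 = (x - a) ⬝ᵥ (x - a) := fun a ↦ by
    simp [dotProduct, sq]
  simp only [testSet, Set.mem_ofPred_eq, Set.mem_preimage, Set.mem_Ici, hsq, map_sub, map_add,
    sub_dotProduct, dotProduct_sub, dotProduct_add, dotProduct_comm x]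
  constructor <;> intro h <;> linarith [dotProduct_comm (F θ) (F θ₀)]

lemma regLaw_real_testSet_le (hσ : σ ≠ 0) (θ₀ θ : Fin n → ℝ) :
    (regLaw n σ F θ₀).real (testSet n F θ₀ θ)
      ≤ exp (-(F (θ - θ₀) ⬝ᵥ F (θ - θ₀)) / (8 * σ ^ 2)) := by
  have hgap : F (θ - θ₀) ⬝ᵥ F (θ + θ₀) / 2 - F (θ - θ₀) ⬝ᵥ F θ₀
      = F (θ - θ₀) ⬝ᵥ F (θ - θ₀) / 2 := by
    simp only [map_sub, map_add, sub_dotProduct, dotProduct_add, dotProduct_sub,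
      dotProduct_comm (F θ₀) (F θ)]
    ring
  rw [regLaw, testSet_eq_preimage]
  refine (pi_gaussianReal_real_dotProduct_preimage_Ici_le _ _ _ _ (t := 1 / (2 * σ ^ 2))
    (by positivity)).trans_eq ?_
  rw [Real.coe_toNNReal _ (sq_nonneg σ), hgap]
  congr 1
  field_simp
  ring

lemma regLaw_real_compl_testSet_le (hF : ∀ v, F v ⬝ᵥ F v = n * (v ⬝ᵥ v)) (hσ : σ ≠ 0)
    {θ₀ θ θ' : Fin n → ℝ} (hθ' : √((θ' - θ) ⬝ᵥ (θ' - θ)) ≤ √((θ - θ₀) ⬝ᵥ (θ - θ₀)) / 18) :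
    (regLaw n σ F θ').real (testSet n F θ₀ θ)ᶜ
      ≤ exp (-(8 / (81 * σ ^ 2)) * n * ((θ - θ₀) ⬝ᵥ (θ - θ₀))) := by
  set d := (θ - θ₀) ⬝ᵥ (θ - θ₀)
  have hcs : -(1 / 18 * d) ≤ (θ - θ₀) ⬝ᵥ (θ' - θ) :=
    neg_mul_dotProduct_self_le_dotProduct (by linarith)
  have hgap : 4 / 9 * (n * d) ≤ F (θ - θ₀) ⬝ᵥ F θ' - F (θ - θ₀) ⬝ᵥ F (θ + θ₀) / 2 := by
    have hexp : F (θ - θ₀) ⬝ᵥ F θ' - F (θ - θ₀) ⬝ᵥ F (θ + θ₀) / 2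
        = n * ((θ - θ₀) ⬝ᵥ (θ' - θ) + d / 2) := by
      simp only [dotProduct_map_map F hF, d, sub_dotProduct, dotProduct_sub, dotProduct_add,
        dotProduct_comm θ₀ θ]
      ring
    rw [hexp]
    have hn : (0 : ℝ) ≤ n := n.cast_nonneg
    nlinarith
  set t := 4 / (9 * σ ^ 2)
  have ht : 0 ≤ t := by positivity
  have hcompl : (testSet n F θ₀ θ)ᶜ
      ⊆ (F (θ - θ₀) ⬝ᵥ ·) ⁻¹' Set.Iic (F (θ - θ₀) ⬝ᵥ F (θ + θ₀) / 2) := by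
    rw [testSet_eq_preimage, ← Set.preimage_compl, Set.compl_Ici]
    exact Set.preimage_mono Set.Iio_subset_Iic_self
  calc (regLaw n σ F θ').real (testSet n F θ₀ θ)ᶜ
      ≤ (regLaw n σ F θ').real
          ((F (θ - θ₀) ⬝ᵥ ·) ⁻¹' Set.Iic (F (θ - θ₀) ⬝ᵥ F (θ + θ₀) / 2)) :=
        measureReal_mono hcompl
    _ ≤ exp (-t * (F (θ - θ₀) ⬝ᵥ F θ' - F (θ - θ₀) ⬝ᵥ F (θ + θ₀) / 2)
          + σ ^ 2 * (n * d) * t ^ 2 / 2) := by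
        rw [← hF, ← Real.coe_toNNReal _ (sq_nonneg σ)]
        exact pi_gaussianReal_real_dotProduct_preimage_Iic_le _ _ _ _ ht
    _ ≤ exp (-t * (4 / 9 * (n * d)) + σ ^ 2 * (n * d) * t ^ 2 / 2) :=
        exp_le_exp.2 (by linarith [mul_le_mul_of_nonneg_left hgap ht])
    _ = exp (-(8 / (81 * σ ^ 2)) * n * d) := by
        congr 1
        simp only [t]
        field_simp
        ring

end

/-- In the fixed-design Gaussian regression model with orthonormal design,
the likelihood-ratio test has type I error `≤ exp(−n‖θ−θ₀‖₂²/(8σ²))` and, for some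
constant `c > 0` depending only on `σ`, type II error `≤ exp(−c n‖θ−θ₀‖₂²)` uniformly over
`‖θ'−θ‖₂ ≤ ‖θ−θ₀‖₂/18`. -/
theorem stmt_15 (σ : ℝ) (hσ : 0 < σ) :
    ∃ c : ℝ, 0 < c ∧
      ∀ (n : ℕ), 0 < n →
      ∀ (F : (Fin n → ℝ) →ₗ[ℝ] (Fin n → ℝ)),
        (∀ v : Fin n → ℝ, ∑ i, (F v i) ^ 2 = (n : ℝ) * ∑ j, v j ^ 2) →
      ∀ θ₀ θ : Fin n → ℝ,
        ((regLaw n σ F θ₀) (testSet n F θ₀ θ)).toReal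
            ≤ Real.exp (-(n : ℝ) * (∑ j, (θ j - θ₀ j) ^ 2) / (8 * σ ^ 2)) ∧
          ∀ θ' : Fin n → ℝ,
            Real.sqrt (∑ j, (θ' j - θ j) ^ 2) ≤
                Real.sqrt (∑ j, (θ j - θ₀ j) ^ 2) / 18 →
            ((regLaw n σ F θ') (testSet n F θ₀ θ)ᶜ).toReal
              ≤ Real.exp (-c * n * ∑ j, (θ j - θ₀ j) ^ 2) := by
  refine ⟨8 / (81 * σ ^ 2), by positivity, fun n _ F hF θ₀ θ ↦ ?_⟩
  have hF' : ∀ v, F v ⬝ᵥ F v = n * (v ⬝ᵥ v) := fun v ↦ by simpa [dotProduct, sq] using hF v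
  have hsq : ∀ v w : Fin n → ℝ, ∑ j, (v j - w j) ^ 2 = (v - w) ⬝ᵥ (v - w) := fun v w ↦ by
    simp [dotProduct, sq]
  simp only [hsq]
  refine ⟨(regLaw_real_testSet_le σ F hσ.ne' θ₀ θ).trans_eq ?_,
    fun θ' hθ' ↦ regLaw_real_compl_testSet_le σ F hF' hσ.ne' hθ'⟩
  rw [hF', neg_mul]

end
end

section
/- Let the sieve prior (T1) put θ_j iid with density g (positive, continuous, with ∫e^{s₀|x|^{p*}}g(x)dx < ∞) for j ≤ k and θ_j = 0 for j > k, and let θ₀ ∈ ℓ². Then for 2 ≤ k ≤ εn/log n with ε small enough, the small-ball exponent ε_n(k) defined by Π(‖θ−θ₀‖₂ ≤ Kε_n(k) | k) = e^{−nε_n(k)²} satisfies ε_n(k)² ≍ ∑_{i>k} θ₀,i² + (k log n)/n, with constants depending on K, g, ‖θ₀‖. -/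
/-!
Write `ρ² = K²ε² - ∑_{i ≥ k} θ₀ᵢ²`: the small-ball probability is the prior mass of the ball of
squared radius `ρ²` about `(θ₀ᵢ)_{i<k}`, near which `g` is bounded above and below by positive
constants `M` and `m`. The mass is `0` when `ρ² ≤ 0`. When `ρ² ≥ k log n / n` the ball contains a
cube of side `2 √(log n / n)`, of mass at least `(2 m √(log n / n))^k ≥ e^{-k log n}`, which forces
`n ε² ≤ k log n`. When `ρ² < k log n / n`, Chernoff's bound `𝟙{∑ yᵢ² ≤ r} ≤ e^{λ r} ∏ e^{-λ yᵢ²}`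
with `λ = n / (2 log n)` bounds the mass by `(C √(log n / n))^k ≤ e^{-k log n / 4}` for large `n`,
which forces `n ε² ≥ k log n / 4`.
-/

open MeasureTheory Real

noncomputable section

/-- the sieve prior (T1) at truncation level `k`: the first `k` coordinates are iid with
density `g`, the remaining ones are `0`. -/
def sievePrior (k : ℕ) (g : ℝ → ℝ) : Measure (Fin k → ℝ) :=
  Measure.pi fun _ : Fin k => volume.withDensity fun x => ENNReal.ofReal (g x)

/-- squared `ℓ²` tail `∑_{i > k} θ₀_i²` (coordinates of `θ₀` indexed from `0`). -/
def sqTail (k : ℕ) (θ₀ : ℕ → ℝ) : ℝ := ∑' j : ℕ, if k ≤ j then θ₀ j ^ 2 else 0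

open Set Filter
open scoped ENNReal

theorem lintegral_fin_nat_prod_eq_prod {n : ℕ} {E : Type*} [MeasurableSpace E]
    {μ : Fin n → Measure E} [∀ i, SigmaFinite (μ i)]
    {f : Fin n → E → ℝ≥0∞} (hf : ∀ i, Measurable (f i)) :
    ∫⁻ x : Fin n → E, ∏ i, f i (x i) ∂(Measure.pi μ) = ∏ i, ∫⁻ x, f i x ∂(μ i) := by
  induction n with
  | zero => simp
  | succ n ih =>
      have hprod : Measurable fun x : Fin n → E => ∏ i : Fin n, f i.succ (x i) :=
        Finset.measurable_prod _ fun i _ => (hf i.succ).comp (measurable_pi_apply i)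
      calc
        _ = ∫⁻ x : E × (Fin n → E), f 0 x.1 * ∏ i : Fin n, f i.succ (x.2 i)
            ∂((μ 0).prod (Measure.pi fun i => μ i.succ)) := by
          rw [← ((measurePreserving_piFinSuccAbove μ 0).symm).lintegral_comp_emb
            (MeasurableEquiv.measurableEmbedding _)]
          simp_rw [MeasurableEquiv.piFinSuccAbove_symm_apply, Fin.insertNthEquiv,
            Fin.prod_univ_succ, Fin.insertNth_zero, Equiv.coe_fn_mk, Fin.cons_succ,
            Fin.zero_succAbove, cast_eq, Fin.cons_zero]
        _ = (∫⁻ x, f 0 x ∂μ 0) * ∏ i : Fin n, ∫⁻ x, f i.succ x ∂(μ i.succ) := by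
          rw [← ih fun i => hf i.succ, ← lintegral_prod_mul (hf 0).aemeasurable
            hprod.aemeasurable]
        _ = ∏ i, ∫⁻ x, f i x ∂(μ i) := by rw [Fin.prod_univ_succ]

section WithDensity

variable {α : Type*} [MeasurableSpace α] {μ : Measure α} {g : α → ℝ} {s : Set α} {m M : ℝ}

theorem smul_restrict_le_restrict_withDensity (hs : MeasurableSet s) (hm : ∀ t ∈ s, m ≤ g t) :
    ENNReal.ofReal m • μ.restrict s ≤ (μ.withDensity fun t => ENNReal.ofReal (g t)).restrict s := by
  rw [restrict_withDensity hs, ← withDensity_const]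
  exact withDensity_mono <| (ae_restrict_iff' hs).2 <|
    .of_forall fun t ht => ENNReal.ofReal_le_ofReal (hm t ht)

theorem restrict_withDensity_le_smul_restrict (hs : MeasurableSet s) (hM : ∀ t ∈ s, g t ≤ M) :
    (μ.withDensity fun t => ENNReal.ofReal (g t)).restrict s ≤ ENNReal.ofReal M • μ.restrict s := by
  rw [restrict_withDensity hs, ← withDensity_const]
  exact withDensity_mono <| (ae_restrict_iff' hs).2 <|
    .of_forall fun t ht => ENNReal.ofReal_le_ofReal (hM t ht)

end WithDensity

theorem lintegral_ofReal_exp_neg_mul_sq_sub {b : ℝ} (hb : 0 < b) (c : ℝ) :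
    ∫⁻ t, ENNReal.ofReal (exp (-b * (t - c) ^ 2)) = ENNReal.ofReal √(π / b) := by
  rw [← ofReal_integral_eq_lintegral_ofReal ((integrable_exp_neg_mul_sq hb).comp_sub_right c)
    (.of_forall fun t => by positivity), integral_sub_right_eq_self (fun t => exp (-b * t ^ 2)),
    integral_gaussian]

theorem lintegral_indicator_exp_neg_mul_sq_sub_le {g : ℝ → ℝ} {s : Set ℝ} {M b : ℝ}
    (hs : MeasurableSet s) (hM : ∀ t ∈ s, g t ≤ M) (hb : 0 < b) (c : ℝ) :
    ∫⁻ t, s.indicator (fun t => ENNReal.ofReal (exp (-b * (t - c) ^ 2))) t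
        ∂(volume.withDensity fun x => ENNReal.ofReal (g x))
      ≤ ENNReal.ofReal (M * √(π / b)) :=
  calc _ ≤ ∫⁻ t, ENNReal.ofReal (exp (-b * (t - c) ^ 2))
        ∂(ENNReal.ofReal M • volume.restrict s) := by
        rw [lintegral_indicator hs]
        exact lintegral_mono' (restrict_withDensity_le_smul_restrict hs hM) le_rfl
    _ ≤ ENNReal.ofReal M * ∫⁻ t, ENNReal.ofReal (exp (-b * (t - c) ^ 2)) := by
        rw [lintegral_smul_measure, smul_eq_mul]
        exact mul_le_mul_right (lintegral_mono' Measure.restrict_le_self le_rfl) _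
    _ = ENNReal.ofReal (M * √(π / b)) := by
        rw [lintegral_ofReal_exp_neg_mul_sq_sub hb, ENNReal.ofReal_mul' (by positivity)]

theorem indicator_ball_le_exp_mul_prod {k : ℕ} (θ : Fin k → ℝ) {r lam : ℝ} (hlam : 0 ≤ lam)
    (x : Fin k → ℝ) :
    {x : Fin k → ℝ | ∑ i, (x i - θ i) ^ 2 ≤ r}.indicator 1 x
      ≤ ENNReal.ofReal (exp (lam * r)) * ∏ i, (Icc (θ i - √r) (θ i + √r)).indicator
          (fun t => ENNReal.ofReal (exp (-lam * (t - θ i) ^ 2))) (x i) := by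
  refine indicator_apply_le' (fun (hx : ∑ i, (x i - θ i) ^ 2 ≤ r) => ?_) fun _ => zero_le
  have hmem : ∀ i, x i ∈ Icc (θ i - √r) (θ i + √r) := fun i =>
    mem_Icc_iff_abs_le.1 <| abs_sub_comm (x i) (θ i) ▸ abs_le_sqrt <|
      (Finset.single_le_sum (fun j _ => sq_nonneg (x j - θ j)) (Finset.mem_univ i)).trans hx
  simp only [indicator_of_mem (hmem _), Pi.one_apply]
  rw [← ENNReal.ofReal_prod_of_nonneg fun i _ => (exp_pos _).le, ← exp_sum,
    ← ENNReal.ofReal_mul (exp_pos _).le, ← exp_add, ← ENNReal.ofReal_one]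
  refine ENNReal.ofReal_le_ofReal (one_le_exp ?_)
  simp only [neg_mul, Finset.sum_neg_distrib, ← Finset.mul_sum]
  nlinarith

theorem sqTail_nonneg (k : ℕ) (θ₀ : ℕ → ℝ) : 0 ≤ sqTail k θ₀ :=
  tsum_nonneg fun _ => by positivity

section SievePrior

variable {g : ℝ → ℝ} {k : ℕ}

theorem sievePrior_ball_eq_zero (hk : 0 < k) (θ : Fin k → ℝ) {r : ℝ} (hr : r ≤ 0) :
    sievePrior k g {x | ∑ i, (x i - θ i) ^ 2 ≤ r} = 0 := by
  have : Nonempty (Fin k) := ⟨⟨0, hk⟩⟩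
  rw [sievePrior]
  refine measure_mono_null (fun x hx => ?_) (measure_singleton θ)
  have hsum := (Finset.sum_eq_zero_iff_of_nonneg fun i _ => sq_nonneg (x i - θ i)).1
    (le_antisymm (hx.trans hr) (by positivity))
  exact funext fun i =>
    sub_eq_zero.1 (pow_eq_zero_iff two_ne_zero |>.1 (hsum i (Finset.mem_univ i)))

theorem pow_le_sievePrior_pi_Icc (θ : Fin k → ℝ) {δ m : ℝ} (hδ : 0 ≤ δ)
    (hm : ∀ i, ∀ t ∈ Icc (θ i - δ) (θ i + δ), m ≤ g t) :
    ENNReal.ofReal (2 * m * δ) ^ k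
      ≤ sievePrior k g (univ.pi fun i => Icc (θ i - δ) (θ i + δ)) := by
  rw [sievePrior, Measure.pi_pi]
  refine (Finset.pow_card_le_prod _ _ (ENNReal.ofReal (2 * m * δ)) fun i _ => ?_).trans_eq'
    (by simp)
  have h := smul_restrict_le_restrict_withDensity (μ := volume) measurableSet_Icc (hm i)
    (Icc (θ i - δ) (θ i + δ))
  rw [Measure.smul_apply, Measure.restrict_apply_self, Measure.restrict_apply_self,
    Real.volume_Icc, smul_eq_mul] at h
  refine le_trans (le_of_eq ?_) h
  rw [← ENNReal.ofReal_mul' (by linarith)]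
  ring_nf

theorem sievePrior_ball_le (θ : Fin k → ℝ) {r M lam : ℝ} (hlam : 0 < lam)
    (hM : ∀ i, ∀ t ∈ Icc (θ i - √r) (θ i + √r), g t ≤ M) :
    sievePrior k g {x | ∑ i, (x i - θ i) ^ 2 ≤ r}
      ≤ ENNReal.ofReal (exp (lam * r)) * ENNReal.ofReal (M * √(π / lam)) ^ k := by
  set F : Fin k → ℝ → ℝ≥0∞ := fun i => (Icc (θ i - √r) (θ i + √r)).indicator
    fun t => ENNReal.ofReal (exp (-lam * (t - θ i) ^ 2))
  have hF : ∀ i, Measurable (F i) := fun i =>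
    (Measurable.ennreal_ofReal (by fun_prop)).indicator measurableSet_Icc
  have hball : MeasurableSet {x : Fin k → ℝ | ∑ i, (x i - θ i) ^ 2 ≤ r} :=
    measurableSet_le (by fun_prop) measurable_const
  calc sievePrior k g {x | ∑ i, (x i - θ i) ^ 2 ≤ r}
      = ∫⁻ x, {x : Fin k → ℝ | ∑ i, (x i - θ i) ^ 2 ≤ r}.indicator 1 x ∂sievePrior k g :=
        (lintegral_indicator_one hball).symm
    _ ≤ ∫⁻ x, ENNReal.ofReal (exp (lam * r)) * ∏ i, F i (x i) ∂sievePrior k g :=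
        lintegral_mono (indicator_ball_le_exp_mul_prod θ hlam.le)
    _ = ENNReal.ofReal (exp (lam * r)) *
          ∏ i, ∫⁻ t, F i t ∂(volume.withDensity fun x => ENNReal.ofReal (g x)) := by
        rw [lintegral_const_mul' _ _ ENNReal.ofReal_ne_top, sievePrior,
          lintegral_fin_nat_prod_eq_prod hF]
    _ ≤ ENNReal.ofReal (exp (lam * r)) * ENNReal.ofReal (M * √(π / lam)) ^ k := by
        gcongr
        exact (Finset.prod_le_prod' fun i _ =>
          lintegral_indicator_exp_neg_mul_sq_sub_le measurableSet_Icc (hM i) hlam (θ i)).trans_eq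
          (by simp)

theorem sievePrior_ball_eq_of_toReal_eq (θ : Fin k → ℝ) {T ρ x : ℝ}
    (h : (sievePrior k g {x | ∑ i, (x i - θ i) ^ 2 + T ≤ ρ}).toReal = exp (-x)) :
    sievePrior k g {x | ∑ i, (x i - θ i) ^ 2 ≤ ρ - T} = ENNReal.ofReal (exp (-x)) := by
  have hfin : sievePrior k g {x | ∑ i, (x i - θ i) ^ 2 + T ≤ ρ} ≠ ⊤ :=
    fun htop => (exp_pos _).ne (by simpa [htop] using h)
  simp_rw [le_sub_iff_add_le, ← h, ENNReal.ofReal_toReal hfin]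

theorem pos_of_sievePrior_ball_eq (hk : 0 < k) (θ : Fin k → ℝ) {r x : ℝ}
    (h : sievePrior k g {x | ∑ i, (x i - θ i) ^ 2 ≤ r} = ENNReal.ofReal (exp (-x))) : 0 < r := by
  by_contra! hr
  rw [sievePrior_ball_eq_zero hk θ hr] at h
  exact (ENNReal.ofReal_pos.2 (exp_pos _)).ne h

theorem neg_le_mul_log_of_ofReal_exp_le_pow {x c : ℝ} (hc : 0 < c)
    (h : ENNReal.ofReal (exp (-x)) ≤ ENNReal.ofReal c ^ k) : -x ≤ k * log c := by
  rw [← ENNReal.ofReal_pow hc.le, ENNReal.ofReal_le_ofReal_iff (by positivity)] at h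
  simpa only [log_exp, log_pow] using log_le_log (exp_pos _) h

theorem mul_log_le_neg_of_pow_le_ofReal_exp {x c : ℝ} (hc : 0 < c)
    (h : ENNReal.ofReal c ^ k ≤ ENNReal.ofReal (exp (-x))) : k * log c ≤ -x := by
  rw [← ENNReal.ofReal_pow hc.le, ENNReal.ofReal_le_ofReal_iff (exp_pos _).le] at h
  simpa only [log_exp, log_pow] using log_le_log (by positivity) h

theorem neg_le_mul_log_of_sievePrior_ball_eq (θ : Fin k → ℝ) {M r L n x : ℝ} (hM0 : 0 < M)
    (hM : ∀ i, ∀ t ∈ Icc (θ i - 1) (θ i + 1), g t ≤ M) (hL : 0 < L) (hn : 0 < n)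
    (hr : r ≤ k * L / n) (hkL : k * L ≤ n)
    (h : sievePrior k g {x | ∑ i, (x i - θ i) ^ 2 ≤ r} = ENNReal.ofReal (exp (-x))) :
    -x ≤ k * log (exp 2⁻¹ * M * √(2 * π) * √(L / n)) := by
  have hr1 : √r ≤ 1 := sqrt_le_one.2 (hr.trans ((div_le_one hn).2 hkL))
  have hball := sievePrior_ball_le θ (lam := (2 * (L / n))⁻¹) (by positivity) fun i t ht =>
    hM i t (Icc_subset_Icc (by linarith) (by linarith) ht)
  have hexp : ENNReal.ofReal (exp ((2 * (L / n))⁻¹ * r)) ≤ ENNReal.ofReal (exp 2⁻¹) ^ k := by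
    rw [← ENNReal.ofReal_pow (exp_pos _).le, ← exp_nat_mul]
    refine ENNReal.ofReal_le_ofReal (exp_le_exp.2 ?_)
    rw [inv_mul_le_iff₀ (by positivity)]
    linarith [show k * L / n = 2 * (L / n) * (k * 2⁻¹) by ring]
  have hconst : exp 2⁻¹ * M * √(2 * π) * √(L / n)
      = exp 2⁻¹ * (M * √(π / (2 * (L / n))⁻¹)) := by
    rw [div_inv_eq_mul, show π * (2 * (L / n)) = 2 * π * (L / n) by ring,
      sqrt_mul (by positivity : (0 : ℝ) ≤ 2 * π)]
    ring
  refine neg_le_mul_log_of_ofReal_exp_le_pow (by positivity) ?_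
  rw [← h, hconst, ENNReal.ofReal_mul (exp_pos _).le, mul_pow]
  exact hball.trans (by gcongr)

theorem mul_log_le_neg_of_sievePrior_ball_eq (θ : Fin k → ℝ) {m r L n x : ℝ} (hm0 : 0 < m)
    (hm : ∀ i, ∀ t ∈ Icc (θ i - 1) (θ i + 1), m ≤ g t) (hL : 0 < L) (hLn : L ≤ n)
    (hr : k * L / n ≤ r)
    (h : sievePrior k g {x | ∑ i, (x i - θ i) ^ 2 ≤ r} = ENNReal.ofReal (exp (-x))) :
    k * log (2 * m * √(L / n)) ≤ -x := by
  have hn : 0 < n := hL.trans_le hLn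
  have hδ : √(L / n) ≤ 1 := sqrt_le_one.2 ((div_le_one hn).2 hLn)
  have hbox : (univ.pi fun i => Icc (θ i - √(L / n)) (θ i + √(L / n)))
      ⊆ {x | ∑ i, (x i - θ i) ^ 2 ≤ r} := by
    intro x hx
    have hsq : ∀ i, (x i - θ i) ^ 2 ≤ L / n := fun i => by
      have := (le_sqrt (abs_nonneg _) (by positivity)).1 (mem_Icc_iff_abs_le.2 (hx i trivial))
      rwa [sq_abs, ← neg_sub, neg_sq] at this
    calc ∑ i, (x i - θ i) ^ 2 ≤ ∑ _i : Fin k, L / n := Finset.sum_le_sum fun i _ => hsq i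
      _ = k * L / n := by simp [mul_div_assoc]
      _ ≤ r := hr
  refine mul_log_le_neg_of_pow_le_ofReal_exp (by positivity) ?_
  rw [← h]
  exact (pow_le_sievePrior_pi_Icc θ (sqrt_nonneg _) fun i t ht =>
    hm i t (Icc_subset_Icc (by linarith) (by linarith) ht)).trans (measure_mono hbox)

end SievePrior

theorem IsCompact.exists_pos_bounds {α : Type*} [TopologicalSpace α] {s : Set α} {f : α → ℝ}
    (hs : IsCompact s) (hf : ContinuousOn f s) (hpos : ∀ x ∈ s, 0 < f x) :
    ∃ m M : ℝ, 0 < m ∧ 0 < M ∧ ∀ x ∈ s, m ≤ f x ∧ f x ≤ M := by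
  rcases s.eq_empty_or_nonempty with rfl | hne
  · exact ⟨1, 1, one_pos, one_pos, by simp⟩
  obtain ⟨a, ha, hmin⟩ := hs.exists_isMinOn hne hf
  obtain ⟨b, hb, hmax⟩ := hs.exists_isMaxOn hne hf
  exact ⟨f a, f b, hpos a ha, hpos b hb, fun x hx => ⟨hmin hx, hmax hx⟩⟩

theorem exists_pos_bounds_near_of_abs_le {ι : Type*} {f : ℝ → ℝ} (hf : Continuous f)
    (hpos : ∀ x, 0 < f x) {θ : ι → ℝ} {B : ℝ} (hθ : ∀ j, |θ j| ≤ B) :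
    ∃ m M : ℝ, 0 < m ∧ 0 < M ∧ ∀ j, ∀ t ∈ Icc (θ j - 1) (θ j + 1), m ≤ f t ∧ f t ≤ M := by
  obtain ⟨m, M, hm, hM, hmM⟩ :=
    (isCompact_Icc (a := -(B + 1)) (b := B + 1)).exists_pos_bounds hf.continuousOn
      fun x _ => hpos x
  refine ⟨m, M, hm, hM, fun j t ht => hmM t ⟨?_, ?_⟩⟩ <;>
    linarith [abs_le.1 (hθ j), ht.1, ht.2]

theorem eventually_abs_add_log_div_two_le (a : ℝ) :
    ∀ᶠ L : ℝ in atTop, |a + log L / 2| ≤ L / 4 := by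
  filter_upwards [isLittleO_log_id_atTop.bound (by norm_num : (0 : ℝ) < 1 / 4),
    eventually_ge_atTop (8 * |a|), eventually_ge_atTop 0] with L hlog ha hL
  rw [norm_eq_abs, norm_eq_abs, id, abs_of_nonneg hL] at hlog
  rw [abs_le] at hlog ⊢
  constructor <;> linarith [le_abs_self a, neg_abs_le a]

theorem eventually_abs_log_mul_sqrt_log_div_add_le {c : ℝ} (hc : 0 < c) :
    ∀ᶠ n : ℕ in atTop, |log (c * √(log n / n)) + log n / 2| ≤ log n / 4 := by
  filter_upwards [(tendsto_log_atTop.comp tendsto_natCast_atTop_atTop).eventually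
    ((eventually_abs_add_log_div_two_le (log c)).and (eventually_gt_atTop 0)),
    eventually_gt_atTop 0] with n ⟨hbound, hL⟩ hn
  simp only [Function.comp_apply] at hbound hL
  have hn : (0 : ℝ) < n := Nat.cast_pos.2 hn
  rw [log_mul hc.ne' (sqrt_pos.2 (div_pos hL hn)).ne', log_sqrt (div_pos hL hn).le,
    log_div hL.ne' hn.ne']
  convert hbound using 2
  ring

theorem two_sided_bound_of_dichotomy {K T v n e : ℝ} (hK : 0 < K) (hn : 0 < n) (hT0 : 0 ≤ T)
    (hv : 0 ≤ v) (hT : T < K ^ 2 * e) (hlow : K ^ 2 * e - T < v / n → v / 4 ≤ n * e)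
    (hup : v / n < K ^ 2 * e - T → n * e ≤ v) :
    1 / (K ^ 2 + 4) * (T + v / n) ≤ e ∧ e ≤ (1 + 1 / K ^ 2) * (T + v / n) := by
  have hK2 : 0 < K ^ 2 := by positivity
  have hu : 0 ≤ v / n := by positivity
  constructor
  · rw [one_div_mul_eq_div, div_le_iff₀ (by positivity)]
    rcases lt_or_ge (K ^ 2 * e - T) (v / n) with h | h
    · have : v / n ≤ 4 * e := by rw [div_le_iff₀ hn]; linarith [hlow h]
      nlinarith
    · nlinarith
  · rw [add_mul, one_mul, one_div_mul_eq_div, ← sub_le_iff_le_add', le_div_iff₀ hK2]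
    rcases lt_or_ge (v / n) (K ^ 2 * e - T) with h | h
    · have : e ≤ v / n := by rw [le_div_iff₀ hn]; linarith [hup h]
      nlinarith
    · nlinarith

theorem stmt_18_general (g : ℝ → ℝ) (hg_pos : ∀ x, 0 < g x) (hg_cont : Continuous g)
    (θ₀ : ℕ → ℝ) (hθ₀ : Summable fun i => θ₀ i ^ 2)
    (K : ℝ) (hK : 0 < K) :
    ∃ εstar cl cu : ℝ, ∃ N : ℕ, 0 < εstar ∧ 0 < cl ∧ 0 < cu ∧
      ∀ n : ℕ, N ≤ n → ∀ k : ℕ, 2 ≤ k → (k : ℝ) ≤ εstar * n / Real.log n →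
      ∀ εn : ℝ, 0 < εn →
        ((sievePrior k g)
            {x : Fin k → ℝ | (∑ i : Fin k, (x i - θ₀ i) ^ 2) + sqTail k θ₀
                ≤ K ^ 2 * εn ^ 2}).toReal
          = Real.exp (-(n : ℝ) * εn ^ 2) →
        cl * (sqTail k θ₀ + k * Real.log n / n) ≤ εn ^ 2 ∧
          εn ^ 2 ≤ cu * (sqTail k θ₀ + k * Real.log n / n) := by
  obtain ⟨m, M, hm, hM, hloc⟩ := exists_pos_bounds_near_of_abs_le hg_cont hg_pos
    fun j => abs_le_sqrt (hθ₀.le_tsum j fun i _ => sq_nonneg (θ₀ i))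
  obtain ⟨N, hN⟩ := eventually_atTop.1 <|
    (eventually_abs_log_mul_sqrt_log_div_add_le (c := exp 2⁻¹ * M * √(2 * π)) (by positivity)).and
    ((eventually_abs_log_mul_sqrt_log_div_add_le (c := 2 * m) (by positivity)).and
    (eventually_ge_atTop 2))
  refine ⟨1, 1 / (K ^ 2 + 4), 1 + 1 / K ^ 2, N, one_pos, by positivity, by positivity, ?_⟩
  intro n hn k hk hkn ε hε hP
  obtain ⟨hup, hlow, hn2⟩ := hN n hn
  have hn0 : (0 : ℝ) < n := by positivity
  have hL : 0 < log n := log_pos (by exact_mod_cast hn2)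
  rw [one_mul, le_div_iff₀ hL] at hkn
  rw [neg_mul] at hP
  have hball := sievePrior_ball_eq_of_toReal_eq (fun i : Fin k => θ₀ i) hP
  have hT := sub_pos.1 (pos_of_sievePrior_ball_eq (by omega) _ hball)
  refine two_sided_bound_of_dichotomy hK hn0 (sqTail_nonneg k θ₀) (by positivity) hT
    (fun hr => ?_) (fun hr => ?_)
  · have := neg_le_mul_log_of_sievePrior_ball_eq _ hM (fun i t ht => (hloc i t ht).2) hL hn0
      hr.le hkn hball
    nlinarith [(abs_le.1 hup).2, (Nat.cast_nonneg k : (0 : ℝ) ≤ k)]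
  · have := mul_log_le_neg_of_sievePrior_ball_eq _ hm (fun i t ht => (hloc i t ht).1) hL
      (log_le_self hn0.le) hr.le hball
    nlinarith [(abs_le.1 hlow).1, (Nat.cast_nonneg k : (0 : ℝ) ≤ k)]

/-- for the sieve prior with a positive continuous density `g` having an
exponential moment, and `θ₀ ∈ ℓ²`, the small-ball exponent `ε_n(k)` defined by
`Π(‖θ−θ₀‖₂ ≤ K ε_n(k) | k) = e^{−n ε_n(k)²}` satisfies
`ε_n(k)² ≍ ∑_{i>k} θ₀_i² + k log n / n` for `2 ≤ k ≤ ε* n / log n`, `ε*` small enough. -/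
theorem stmt_18 (g : ℝ → ℝ) (hg_pos : ∀ x, 0 < g x) (hg_cont : Continuous g)
    (hg_prob : ∫ x, g x = 1)
    (s₀ p : ℝ) (hs₀ : 0 < s₀) (hp : 1 ≤ p)
    (hmom : Integrable fun x => Real.exp (s₀ * |x| ^ p) * g x)
    (θ₀ : ℕ → ℝ) (hθ₀ : Summable fun i => θ₀ i ^ 2)
    (K : ℝ) (hK : 0 < K) :
    ∃ εstar cl cu : ℝ, ∃ N : ℕ, 0 < εstar ∧ 0 < cl ∧ 0 < cu ∧
      ∀ n : ℕ, N ≤ n → ∀ k : ℕ, 2 ≤ k → (k : ℝ) ≤ εstar * n / Real.log n →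
      ∀ εn : ℝ, 0 < εn →
        ((sievePrior k g)
            {x : Fin k → ℝ | (∑ i : Fin k, (x i - θ₀ i) ^ 2) + sqTail k θ₀
                ≤ K ^ 2 * εn ^ 2}).toReal
          = Real.exp (-(n : ℝ) * εn ^ 2) →
        cl * (sqTail k θ₀ + k * Real.log n / n) ≤ εn ^ 2 ∧
          εn ^ 2 ≤ cu * (sqTail k θ₀ + k * Real.log n / n) :=
  stmt_18_general g hg_pos hg_cont θ₀ hθ₀ K hK

end
end

section
/- Let 0 < β and k_β(n) = ⌊(n/log n)^{1/(2β+1)}⌋. For θ₀ with θ₀,i² = (1+i)^{−2β−1}, the quantity r(k) = ∑_{i>k}θ₀,i² + k log n / n is minimized over k ∈ {2,…,⌊εn/log n⌋} up to constants at k ≍ k_β(n), and min_k r(k) ≍ (n/log n)^{−2β/(2β+1)}, this being both an upper and a lower bound. -/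
/-!
By the integral test, `∑_{i>k} (1+i)^(-s-1)` lies between `(k+2)^(-s)/s` and `(k+1)^(-s)/s`.
With `x = n / log n` and `t = x^(1/(s+1))` one has `t^(-s) = t/x = x^(-s/(s+1))`, so comparing `y`
with `t` gives `max (y^(-s)) (y/x) ≥ x^(-s/(s+1))` for every `y > 0`: this is the lower bound.
For `k = ⌊t⌋` both `(k+1)^(-s)` and `k/x` are at most `x^(-s/(s+1))`: this is the upper bound.
-/

open Real Filter Topology Set MeasureTheory

/-- `tailSum (2 * β) k` is the paper's `∑_{i>k} θ₀,i²`. -/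
noncomputable def tailSum (s : ℝ) (k : ℕ) : ℝ :=
  ∑' i : ℕ, if k < i then ((1 : ℝ) + i) ^ (-s - 1) else 0

lemma tailSum_nonneg (s : ℝ) (k : ℕ) : 0 ≤ tailSum s k :=
  tsum_nonneg fun i => by split_ifs <;> positivity

lemma tailSum_eq_tsum_natCast (s : ℝ) (k : ℕ) :
    tailSum s k = ∑' n : ℕ, ((n + (k + 2) : ℕ) : ℝ) ^ (-s - 1) := by
  rw [tailSum, ← (add_left_injective (k + 1)).tsum_eq]
  · refine tsum_congr fun n => ?_
    rw [if_pos (by omega)]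
    push_cast
    ring_nf
  · intro i hi
    have hki : k < i := by
      by_contra h
      simp [h] at hi
    exact ⟨i - (k + 1), Nat.sub_add_cancel hki⟩

section IntegralTest

variable {s : ℝ}

lemma antitoneOn_rpow_neg_sub_one (hs : 0 < s) {c : ℝ} (hc : 0 < c) :
    AntitoneOn (fun x : ℝ => x ^ (-s - 1)) (Ici c) :=
  (antitoneOn_rpow_Ioi_of_exponent_nonpos (by linarith)).mono (Ici_subset_Ioi.2 hc)

lemma integral_Ioi_rpow_neg_sub_one (hs : 0 < s) {c : ℝ} (hc : 0 < c) :
    ∫ x in Ioi c, x ^ (-s - 1) = c ^ (-s) / s := by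
  rw [integral_Ioi_rpow_of_lt (by linarith) hc, sub_add_cancel, neg_div_neg_eq]

lemma tailSum_le (hs : 0 < s) (k : ℕ) : tailSum s k ≤ ((k : ℝ) + 1) ^ (-s) / s := by
  have hc : (0 : ℝ) < (k + 1 : ℕ) := by positivity
  have h := (antitoneOn_rpow_neg_sub_one hs hc).tsum_comp_add_le_integral (k + 1)
    (integrableOn_Ioi_rpow_of_lt (by linarith) hc)
    fun x hx => (rpow_pos_of_pos (hc.trans hx) _).le
  rw [integral_Ioi_rpow_neg_sub_one hs hc] at h
  rw [tailSum_eq_tsum_natCast]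
  exact_mod_cast h

lemma le_tailSum (hs : 0 < s) (k : ℕ) : ((k : ℝ) + 2) ^ (-s) / s ≤ tailSum s k := by
  have hc : (0 : ℝ) < (k + 2 : ℕ) := by positivity
  have h := (antitoneOn_rpow_neg_sub_one hs hc).integral_le_tsum_comp_add (k + 2)
    (Real.summable_nat_rpow.2 (by linarith))
    fun x hx => (rpow_pos_of_pos (hc.trans hx) _).le
  rw [integral_Ioi_rpow_neg_sub_one hs hc] at h
  rw [tailSum_eq_tsum_natCast]
  exact_mod_cast h

end IntegralTest

section Rate

variable {s x : ℝ}

lemma rpow_one_div_add_one_rpow_neg (hx : 0 ≤ x) :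
    (x ^ (1 / (s + 1))) ^ (-s) = x ^ (-s / (s + 1)) := by
  rw [← rpow_mul hx]
  ring_nf

lemma rpow_one_div_add_one_div_self (hx : 0 < x) (hs : s + 1 ≠ 0) :
    x ^ (1 / (s + 1)) / x = x ^ (-s / (s + 1)) := by
  rw [← rpow_sub_one hx.ne']
  congr 1
  field_simp
  ring

lemma rpow_neg_div_add_one_le_max (hs : 0 ≤ s) (hx : 0 < x) {y : ℝ} (hy : 0 < y) :
    x ^ (-s / (s + 1)) ≤ max (y ^ (-s)) (y / x) := by
  rcases le_total y (x ^ (1 / (s + 1))) with hyt | hty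
  · refine le_max_of_le_left ?_
    rw [← rpow_one_div_add_one_rpow_neg hx.le]
    exact rpow_le_rpow_of_nonpos hy hyt (neg_nonpos.2 hs)
  · refine le_max_of_le_right ?_
    rw [← rpow_one_div_add_one_div_self hx (by linarith)]
    gcongr

lemma le_tailSum_add_div (hs : 0 < s) (hx : 0 < x) {k : ℕ} (hk : 2 ≤ k) :
    min (1 / s) (1 / 2) * x ^ (-s / (s + 1)) ≤ tailSum s k + k / x := by
  have hk' : (2 : ℝ) ≤ k := by exact_mod_cast hk
  rcases le_max_iff.1 (rpow_neg_div_add_one_le_max hs.le hx (y := k + 2) (by positivity))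
    with h | h
  · calc min (1 / s) (1 / 2) * x ^ (-s / (s + 1))
        ≤ 1 / s * ((k : ℝ) + 2) ^ (-s) :=
          mul_le_mul (min_le_left _ _) h (by positivity) (by positivity)
      _ ≤ tailSum s k := by simpa only [one_div_mul_eq_div] using le_tailSum hs k
      _ ≤ tailSum s k + k / x := le_add_of_nonneg_right (by positivity)
  · calc min (1 / s) (1 / 2) * x ^ (-s / (s + 1))
        ≤ 1 / 2 * (((k : ℝ) + 2) / x) :=
          mul_le_mul (min_le_right _ _) h (by positivity) (by positivity)
      _ ≤ k / x := by
        rw [← mul_div_assoc]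
        gcongr
        linarith
      _ ≤ tailSum s k + k / x := le_add_of_nonneg_left (tailSum_nonneg s k)

lemma tailSum_floor_add_div_le (hs : 0 < s) (hx : 0 < x) :
    tailSum s ⌊x ^ (1 / (s + 1))⌋₊ + ⌊x ^ (1 / (s + 1))⌋₊ / x ≤
      (1 / s + 1) * x ^ (-s / (s + 1)) := by
  set t := x ^ (1 / (s + 1))
  have ht : 0 < t := rpow_pos_of_pos hx _
  have h_tail : tailSum s ⌊t⌋₊ ≤ x ^ (-s / (s + 1)) / s :=
    calc tailSum s ⌊t⌋₊ ≤ ((⌊t⌋₊ : ℝ) + 1) ^ (-s) / s := tailSum_le hs _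
      _ ≤ t ^ (-s) / s := div_le_div_of_nonneg_right
        (rpow_le_rpow_of_nonpos ht (Nat.lt_floor_add_one t).le (by linarith)) hs.le
      _ = x ^ (-s / (s + 1)) / s := by rw [rpow_one_div_add_one_rpow_neg hx.le]
  have h_div : (⌊t⌋₊ : ℝ) / x ≤ x ^ (-s / (s + 1)) := by
    rw [← rpow_one_div_add_one_div_self hx (by linarith)]
    gcongr
    exact Nat.floor_le ht.le
  linarith [show (1 / s + 1) * x ^ (-s / (s + 1)) = x ^ (-s / (s + 1)) / s + x ^ (-s / (s + 1))
    by ring]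

end Rate

lemma tendsto_div_log_atTop : Tendsto (fun x : ℝ => x / log x) atTop atTop := by
  have h : Tendsto (fun x : ℝ => log x / x) atTop (𝓝[>] 0) :=
    tendsto_nhdsWithin_iff.2
      ⟨by simpa using tendsto_pow_log_div_mul_add_atTop 1 0 1 one_ne_zero,
        (eventually_gt_atTop 1).mono fun x hx => div_pos (log_pos hx) (by linarith)⟩
  simpa only [Function.comp_def, inv_div] using tendsto_inv_nhdsGT_zero.comp h

/-- for `θ₀` with `θ₀_i² = (1+i)^{-2β-1}` (`i ≥ 1`), the criterion
`r(k) = ∑_{i>k} θ₀_i² + k log n / n` is minimized, up to constants, at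
`k_β(n) = ⌊(n/log n)^{1/(2β+1)}⌋`, and the minimal value is `≍ (n/log n)^{-2β/(2β+1)}`,
both as an upper and a lower bound. -/
theorem stmt_19 (β : ℝ) (hβ : 0 < β) :
    ∃ cl cu : ℝ, ∃ N : ℕ, 0 < cl ∧ 0 < cu ∧
      ∀ n : ℕ, N ≤ n →
        (2 ≤ Nat.floor (((n : ℝ) / Real.log n) ^ ((1 : ℝ) / (2 * β + 1)))) ∧
        (∀ k : ℕ, 2 ≤ k →
          cl * ((n : ℝ) / Real.log n) ^ (-(2 * β) / (2 * β + 1)) ≤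
            (∑' i : ℕ, if k < i then ((1 : ℝ) + i) ^ (-(2 * β) - 1) else 0)
              + (k : ℝ) * Real.log n / n) ∧
        ((∑' i : ℕ, if Nat.floor (((n : ℝ) / Real.log n) ^ ((1 : ℝ) / (2 * β + 1))) < i
              then ((1 : ℝ) + i) ^ (-(2 * β) - 1) else 0)
            + (Nat.floor (((n : ℝ) / Real.log n) ^ ((1 : ℝ) / (2 * β + 1))) : ℝ) *
                Real.log n / n
          ≤ cu * ((n : ℝ) / Real.log n) ^ (-(2 * β) / (2 * β + 1))) := by
  have hs : 0 < 2 * β := by positivity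
  have hx : Tendsto (fun n : ℕ => (n : ℝ) / log n) atTop atTop :=
    tendsto_div_log_atTop.comp tendsto_natCast_atTop_atTop
  have ht := (tendsto_rpow_atTop (by positivity : (0 : ℝ) < 1 / (2 * β + 1))).comp hx
  obtain ⟨N, hN⟩ :=
    eventually_atTop.1 ((hx.eventually_gt_atTop 0).and (ht.eventually_ge_atTop 2))
  refine ⟨min (1 / (2 * β)) (1 / 2), 1 / (2 * β) + 1, N, by positivity, by positivity,
    fun n hn => ?_⟩
  obtain ⟨hxn, htn⟩ := hN n hn
  simp only [← div_div_eq_mul_div]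
  exact ⟨Nat.le_floor (by exact_mod_cast htn), fun k hk => le_tailSum_add_div hs hxn hk,
    tailSum_floor_add_div_le hs hxn⟩
end
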